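/- arXiv:1312.7132 — 5 statements merged into one kernel-verified Lean document; each statement's English description precedes it below -/
import Mathlib

section
/- Let S, Y be independent random variables where S ≥ 0 has distribution with right endpoint equal to 1, and Y > 0 has a rapidly varying tail (P(Y > λu)/P(Y > u) → 0 for every λ > 1). Then for any w ∈ (0,1), P(SY > u) ∼ P(SY > u, S > w) as u → ∞. -/
/-!
Fix `w < v < 1`. Mass escaping above `u` with `S ≤ w` needs `Y > u / w`, while independence gives
`P(SY > u) ≥ P(S > v) P(Y > u / v)` with `P(S > v) > 0`. Rapid variation with `λ = v / w` makes
`P(Y > u / w) / P(Y > u / v)` tend to `0`, so the part of `P(SY > u)` with `S ≤ w` is negligible.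
-/

open MeasureTheory ProbabilityTheory Filter Topology Real

lemma tendsto_div_comp_div_of_lt {F : ℝ → ℝ}
    (hF : ∀ l : ℝ, 1 < l → Tendsto (fun u => F (l * u) / F u) atTop (𝓝 0))
    {a b : ℝ} (ha : 0 < a) (hab : a < b) :
    Tendsto (fun u => F (u / a) / F (u / b)) atTop (𝓝 0) := by
  have hb : 0 < b := ha.trans hab
  refine ((hF (b / a) ((one_lt_div ha).mpr hab)).comp (tendsto_id.atTop_div_const hb)).congr
    fun u => ?_
  simp only [Function.comp_apply, id]
  congr 2
  field_simp

lemma tendsto_div_eq_one_of_add {α : Type*} {l : Filter α} {f g h : α → ℝ}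
    (hsum : ∀ᶠ x in l, g x = f x + h x) (hg : ∀ᶠ x in l, g x ≠ 0)
    (hh : Tendsto (fun x => h x / g x) l (𝓝 0)) :
    Tendsto (fun x => f x / g x) l (𝓝 1) := by
  refine (sub_zero (1 : ℝ) ▸ hh.const_sub 1).congr' ?_
  filter_upwards [hsum, hg] with x hsum hg
  rw [eq_div_iff hg, sub_mul, div_mul_cancel₀ _ hg]
  linarith

section Contraction

variable {Ω : Type*} [MeasurableSpace Ω] {μ : Measure Ω} {S Y : Ω → ℝ}

lemma measure_gt_mul_measure_gt_le_measure_mul_gt (hindep : IndepFun S Y μ) {a u : ℝ}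
    (ha : 0 < a) (hu : 0 ≤ u) :
    μ {ω | S ω > a} * μ {ω | Y ω > u / a} ≤ μ {ω | S ω * Y ω > u} := by
  have hprod := hindep.measure_inter_preimage_eq_mul (Set.Ioi a) (Set.Ioi (u / a))
    measurableSet_Ioi measurableSet_Ioi
  refine hprod.symm.trans_le (measure_mono fun ω ⟨(hS : a < S ω), (hY : u / a < Y ω)⟩ => ?_)
  have hY0 : 0 < Y ω := (div_nonneg hu ha.le).trans_lt hY
  calc u = a * (u / a) := by field_simp
    _ < a * Y ω := mul_lt_mul_of_pos_left hY ha
    _ < S ω * Y ω := mul_lt_mul_of_pos_right hS hY0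

lemma measure_mul_gt_and_le_le_measure_gt (hYpos : ∀ᵐ ω ∂μ, 0 < Y ω) {w : ℝ} (hw : 0 < w)
    (u : ℝ) : μ {ω | S ω * Y ω > u ∧ S ω ≤ w} ≤ μ {ω | Y ω > u / w} := by
  refine measure_mono_ae ?_
  filter_upwards [hYpos] with ω hY ⟨(hu : u < S ω * Y ω), hSw⟩
  show u / w < Y ω
  rw [div_lt_iff₀ hw]
  nlinarith

variable [IsFiniteMeasure μ]

lemma measure_mul_gt_eq_add (hS : Measurable S) (u w : ℝ) :
    (μ {ω | S ω * Y ω > u}).toReal =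
      (μ {ω | S ω * Y ω > u ∧ S ω > w}).toReal +
        (μ {ω | S ω * Y ω > u ∧ S ω ≤ w}).toReal := by
  rw [← ENNReal.toReal_add (measure_ne_top _ _) (measure_ne_top _ _),
    ← measure_inter_add_sdiff {ω | S ω * Y ω > u} (hS measurableSet_Ioi)]
  congr 3
  ext ω
  exact and_congr_right' (not_lt (a := w) (b := S ω))

lemma tendsto_measure_mul_gt_and_le_div (hindep : IndepFun S Y μ)
    (hYpos : ∀ᵐ ω ∂μ, 0 < Y ω) (hYend : ∀ u : ℝ, 0 < μ {ω | Y ω > u})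
    (hrap : ∀ l : ℝ, 1 < l →
      Tendsto (fun u => (μ {ω | Y ω > l * u}).toReal / (μ {ω | Y ω > u}).toReal)
        atTop (𝓝 0))
    {v w : ℝ} (hw : 0 < w) (hwv : w < v) (hSv : 0 < μ {ω | S ω > v}) :
    Tendsto (fun u =>
        (μ {ω | S ω * Y ω > u ∧ S ω ≤ w}).toReal / (μ {ω | S ω * Y ω > u}).toReal)
      atTop (𝓝 0) := by
  set F : ℝ → ℝ := fun u => (μ {ω | Y ω > u}).toReal
  have hF : ∀ u, 0 < F u := fun u => ENNReal.toReal_pos (hYend u).ne' (measure_ne_top _ _)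
  have hc : 0 < (μ {ω | S ω > v}).toReal := ENNReal.toReal_pos hSv.ne' (measure_ne_top _ _)
  have hbound :=
    (tendsto_div_comp_div_of_lt (F := F) hrap hw hwv).div_const (μ {ω | S ω > v}).toReal
  rw [zero_div] at hbound
  refine squeeze_zero' (Eventually.of_forall fun u => by positivity) ?_ hbound
  filter_upwards [eventually_ge_atTop 0] with u hu
  rw [div_div, mul_comm]
  refine div_le_div₀ ENNReal.toReal_nonneg ?_ (mul_pos hc (hF _)) ?_
  · exact ENNReal.toReal_mono (measure_ne_top _ _) (measure_mul_gt_and_le_le_measure_gt hYpos hw u)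
  · rw [← ENNReal.toReal_mul]
    exact ENNReal.toReal_mono (measure_ne_top _ _)
      (measure_gt_mul_measure_gt_le_measure_mul_gt hindep (hw.trans hwv) hu)

end Contraction

theorem random_contraction_truncation_general
    {Ω : Type*} [MeasureSpace Ω] [IsProbabilityMeasure (ℙ : Measure Ω)]
    (S Y : Ω → ℝ) (hS : Measurable S)
    (hindep : IndepFun S Y)
    (hSend : ∀ w : ℝ, w < 1 → 0 < ℙ {ω | S ω > w})
    (hYpos : ∀ᵐ ω ∂ℙ, 0 < Y ω)
    (hYend : ∀ u : ℝ, 0 < ℙ {ω | Y ω > u})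
    (hrap : ∀ l : ℝ, 1 < l →
      Tendsto (fun u => (ℙ {ω | Y ω > l * u}).toReal / (ℙ {ω | Y ω > u}).toReal)
        atTop (𝓝 0)) :
    ∀ w : ℝ, 0 < w → w < 1 →
      Tendsto (fun u =>
          (ℙ {ω | S ω * Y ω > u ∧ S ω > w}).toReal / (ℙ {ω | S ω * Y ω > u}).toReal)
        atTop (𝓝 1) := by
  intro w hw0 hw1
  obtain ⟨v, hwv, hv1⟩ := exists_between hw1
  have hv0 : 0 < v := hw0.trans hwv
  refine tendsto_div_eq_one_of_add (Eventually.of_forall fun u => measure_mul_gt_eq_add hS u w)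
    ?_ (tendsto_measure_mul_gt_and_le_div hindep hYpos hYend hrap hw0 hwv (hSend v hv1))
  filter_upwards [eventually_ge_atTop 0] with u hu
  have hpos := (ENNReal.mul_pos (hSend v hv1).ne' (hYend (u / v)).ne').trans_le
    (measure_gt_mul_measure_gt_le_measure_mul_gt hindep hv0 hu)
  exact (ENNReal.toReal_pos hpos.ne' (measure_ne_top _ _)).ne'

theorem random_contraction_truncation
    {Ω : Type*} [MeasureSpace Ω] [IsProbabilityMeasure (ℙ : Measure Ω)]
    (S Y : Ω → ℝ) (hS : Measurable S) (hY : Measurable Y)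
    (hindep : IndepFun S Y)
    (hS0 : ∀ᵐ ω ∂ℙ, 0 ≤ S ω) (hS1 : ∀ᵐ ω ∂ℙ, S ω ≤ 1)
    (hSend : ∀ w : ℝ, w < 1 → 0 < ℙ {ω | S ω > w})
    (hYpos : ∀ᵐ ω ∂ℙ, 0 < Y ω)
    (hYend : ∀ u : ℝ, 0 < ℙ {ω | Y ω > u})
    (hrap : ∀ l : ℝ, 1 < l →
      Tendsto (fun u => (ℙ {ω | Y ω > l * u}).toReal / (ℙ {ω | Y ω > u}).toReal)
        atTop (𝓝 0)) :
    ∀ w : ℝ, 0 < w → w < 1 →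
      Tendsto (fun u =>
          (ℙ {ω | S ω * Y ω > u ∧ S ω > w}).toReal / (ℙ {ω | S ω * Y ω > u}).toReal)
        atTop (𝓝 1) :=
  random_contraction_truncation_general S Y hS hindep hSend hYpos hYend hrap
end

section
/- Let S, Y, Y* be independent random variables, S ≥ 0 with distribution whose right endpoint is 1, Y with rapidly varying tail, and suppose P(Y > u) ∼ L(u) P(Y* > u) as u → ∞ for some slowly varying function L. Then P(SY > u) ∼ L(u) P(SY* > u) as u → ∞. -/
open MeasureTheory ProbabilityTheory Filter Topology Real

/-- `g` is regularly varying at infinity with index `ρ`. -/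
def RegularlyVarying (g : ℝ → ℝ) (ρ : ℝ) : Prop :=
  ∀ x : ℝ, 0 < x → Filter.Tendsto (fun u => g (u * x) / g u) Filter.atTop (nhds (x ^ ρ))

/-!
Conditioning on `S` gives `P(S Y > u) = ∫ P(s Y > u) dP_S(s)`, and likewise for `Y*`. The part
`s ≤ 1/2` contributes at most `P(Y > 2u)`, which is negligible: by rapid variation it is
`o(P(Y* > 4u/3))`, and `P(S Y* > u) ≥ P(S > 3/4) P(Y* > 4u/3)`. For `s > 1/2` the point `u/s`
lies in `[u, 2u]`, where the uniform convergence theorem for the measurable slowly varying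
function `h = P(Y > ·) / P(Y* > ·)` gives `h(u/s) = (1 + o(1)) h(u)` uniformly in `s`. The
function `L` need not be measurable; it enters only through `h ~ L`.
-/

open Set Asymptotics

lemma exists_mem_Icc_notMem_and_add_notMem {t : Set ℝ} {b : ℝ}
    (ht : volume t < ENNReal.ofReal (b / 2)) (s : ℝ) :
    ∃ x ∈ Icc 0 b, x ∉ t ∧ s + x ∉ t := by
  by_contra! hcon
  have hsub : Icc 0 b ⊆ t ∪ (fun x => s + x) ⁻¹' t := fun x hx => by
    by_cases hxt : x ∈ t
    · exact Or.inl hxt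
    · exact Or.inr (hcon x hx hxt)
  have := (measure_mono hsub).trans (measure_union_le (μ := volume) _ _)
  rw [Real.volume_Icc, measure_preimage_add, sub_zero] at this
  have hb : ENNReal.ofReal b = ENNReal.ofReal (b / 2) + ENNReal.ofReal (b / 2) := by
    have hb0 : 0 ≤ b / 2 := by
      by_contra hb0
      simp [ENNReal.ofReal_eq_zero.2 (not_le.1 hb0).le] at ht
    rw [← ENNReal.ofReal_add hb0 hb0, add_halves]
  exact absurd this (not_le.2 (hb ▸ ENNReal.add_lt_add ht ht))

/- Egorov's theorem on `[0, 2b]` leaves an exceptional set `E` too small for `E` and `E - s n` to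
cover `[0, b]`; at a point `x` outside both, `g (t n + s n + x)` is close to both `g (t n)` and
`g (t n + s n)`. -/
lemma tendsto_add_sub_of_measurable {g : ℝ → ℝ} (hg : Measurable g)
    (hsv : ∀ s, Tendsto (fun t => g (t + s) - g t) atTop (𝓝 0))
    {t s : ℕ → ℝ} (ht : Tendsto t atTop atTop) {a : ℝ} (hs : ∀ n, s n ∈ Icc 0 a) :
    Tendsto (fun n => g (t n + s n) - g (t n)) atTop (𝓝 0) := by
  rw [Metric.tendsto_nhds]
  intro ε hε
  set b := a + 1
  have hb : 0 < b := by linarith [(hs 0).1.trans (hs 0).2]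
  set f : ℕ → ℝ → ℝ := fun n x =>
    |g (t n + x) - g (t n)| + |g (t n + s n + x) - g (t n + s n)|
  have hts : Tendsto (fun n => t n + s n) atTop atTop :=
    tendsto_atTop_mono (fun n => le_add_of_nonneg_right (hs n).1) ht
  have hf : ∀ x, Tendsto (fun n => f n x) atTop (𝓝 0) := fun x => by
    simpa using ((hsv x).comp ht).abs.add ((hsv x).comp hts).abs
  obtain ⟨E, -, -, hE, hunif⟩ := tendstoUniformlyOn_of_ae_tendsto (μ := volume)
    (s := Icc 0 (2 * b)) (fun n => (by fun_prop : Measurable (f n)).stronglyMeasurable)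
    stronglyMeasurable_const measurableSet_Icc measure_Icc_lt_top.ne
    (ae_of_all _ fun x _ => hf x) (ε := b / 4) (by positivity)
  filter_upwards [Metric.tendstoUniformlyOn_iff.1 hunif (ε / 2) (half_pos hε)] with n hn
  have hEb : volume E < ENNReal.ofReal (b / 2) :=
    hE.trans_lt ((ENNReal.ofReal_lt_ofReal_iff (by positivity)).2 (by linarith))
  obtain ⟨x, hx, hxE, hsxE⟩ := exists_mem_Icc_notMem_and_add_notMem hEb (s n)
  have hsn := hs n
  have h1 := hn x ⟨⟨hx.1, by linarith [hx.2]⟩, hxE⟩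
  have h2 := hn (s n + x) ⟨⟨by linarith [hx.1, hsn.1], by linarith [hx.2, hsn.2]⟩, hsxE⟩
  simp only [f, dist_zero_left, Real.norm_eq_abs, ← add_assoc] at h1 h2
  rw [abs_of_nonneg (by positivity)] at h1 h2
  rw [Real.dist_eq, sub_zero]
  calc |g (t n + s n) - g (t n)|
      ≤ |g (t n + s n) - g (t n + s n + x)| + |g (t n + s n + x) - g (t n)| := abs_sub_le _ _ _
    _ < ε := by
        rw [abs_sub_comm]
        linarith [abs_nonneg (g (t n + x) - g (t n)),
          abs_nonneg (g (t n + s n + s n + x) - g (t n + s n))]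

theorem tendstoUniformlyOn_add_sub_of_measurable {g : ℝ → ℝ} (hg : Measurable g)
    (hsv : ∀ s, Tendsto (fun t => g (t + s) - g t) atTop (𝓝 0)) (a : ℝ) :
    TendstoUniformlyOn (fun t s => g (t + s) - g t) 0 atTop (Icc 0 a) := by
  rw [Metric.tendstoUniformlyOn_iff]
  by_contra! hcon
  obtain ⟨ε, hε, hfreq⟩ := hcon
  choose t ht s hs hbad using fun n : ℕ => (frequently_atTop.1 hfreq) n
  have hlim := tendsto_add_sub_of_measurable hg hsv
    (tendsto_atTop_mono ht tendsto_natCast_atTop_atTop) hs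
  obtain ⟨n, hn⟩ := (hlim.eventually (Metric.ball_mem_nhds 0 hε)).exists
  exact (hbad n).not_gt (by simpa [dist_comm] using hn)

theorem RegularlyVarying.tendstoUniformlyOn_div {h : ℝ → ℝ} (hh : RegularlyVarying h 0)
    (hmeas : Measurable h) (hpos : ∀ u > 0, 0 < h u) (c : ℝ) :
    TendstoUniformlyOn (fun u x => h (u * x) / h u) 1 atTop (Icc 1 c) := by
  set g : ℝ → ℝ := fun t => log (h (exp t))
  have hg : Measurable g := measurable_log.comp (hmeas.comp measurable_exp)
  have hsv : ∀ s, Tendsto (fun t => g (t + s) - g t) atTop (𝓝 0) := fun s => by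
    have := ((hh (exp s) (exp_pos s)).comp tendsto_exp_atTop).log (by simp)
    rw [rpow_zero, log_one] at this
    refine this.congr fun t => ?_
    simp only [Function.comp, g, exp_add]
    exact log_div (hpos _ (by positivity)).ne' (hpos _ (exp_pos _)).ne'
  rw [Metric.tendstoUniformlyOn_iff]
  intro ε hε
  obtain ⟨δ, hδ, hexp⟩ := Metric.continuousAt_iff.1 continuous_exp.continuousAt ε hε
  have hunif := Metric.tendstoUniformlyOn_iff.1
    (tendstoUniformlyOn_add_sub_of_measurable hg hsv (log c)) δ hδ
  filter_upwards [tendsto_log_atTop.eventually hunif, eventually_gt_atTop 0] with u hu hu0 x hx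
  have hx0 : 0 < x := one_pos.trans_le hx.1
  have hd : dist (g (log u + log x) - g (log u)) 0 < δ := by
    rw [dist_comm]; exact hu (log x) ⟨log_nonneg hx.1, log_le_log hx0 hx.2⟩
  have hid : exp (g (log u + log x) - g (log u)) = h (u * x) / h u := by
    simp only [g, exp_sub, ← log_mul hu0.ne' hx0.ne', exp_log hu0, exp_log (mul_pos hu0 hx0),
      exp_log (hpos _ hu0), exp_log (hpos _ (mul_pos hu0 hx0))]
  simpa [hid, exp_zero, dist_comm] using hexp hd

theorem RegularlyVarying.eventually_abs_sub_le {h : ℝ → ℝ} (hh : RegularlyVarying h 0)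
    (hmeas : Measurable h) (hpos : ∀ u > 0, 0 < h u) {ε : ℝ} (hε : 0 < ε) (c : ℝ) :
    ∀ᶠ u in atTop, ∀ v ∈ Icc u (c * u), |h v - h u| ≤ ε * h u := by
  filter_upwards [Metric.tendstoUniformlyOn_iff.1 (hh.tendstoUniformlyOn_div hmeas hpos c) ε hε,
    eventually_gt_atTop 0] with u hu hu0 v hv
  have := hu (v / u) ⟨(one_le_div hu0).2 hv.1, (div_le_iff₀ hu0).2 hv.2⟩
  rw [mul_div_cancel₀ v hu0.ne', Pi.one_apply, dist_comm, Real.dist_eq,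
    div_sub_one (hpos u hu0).ne', abs_div, abs_of_pos (hpos u hu0),
    div_lt_iff₀ (hpos u hu0)] at this
  exact this.le

def RapidlyVarying (F : ℝ → ℝ) : Prop :=
  ∀ l, 1 < l → Tendsto (fun u => F (l * u) / F u) atTop (𝓝 0)

theorem RegularlyVarying.of_isEquivalent {g g' : ℝ → ℝ} {ρ : ℝ} (hg : RegularlyVarying g ρ)
    (hgg' : g ~[atTop] g') : RegularlyVarying g' ρ := fun x hx =>
  ((hgg'.comp_tendsto (tendsto_id.atTop_mul_const hx)).div hgg').tendsto_nhds (hg x hx)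

theorem RapidlyVarying.of_eq_mul {F G h : ℝ → ℝ} (hF : RapidlyVarying F)
    (hh : RegularlyVarying h 0) (hFG : ∀ᶠ u in atTop, F u = h u * G u)
    (hh0 : ∀ᶠ u in atTop, h u ≠ 0) : RapidlyVarying G := by
  intro l hl
  have hlu : Tendsto (fun u => l * u) atTop atTop := tendsto_id.const_mul_atTop (by linarith)
  have hratio : Tendsto (fun u => h u / h (l * u)) atTop (𝓝 1) := by
    simpa [mul_comm] using (hh l (by linarith)).inv₀ (by norm_num)
  have hlim := (hF l hl).mul hratio
  rw [zero_mul] at hlim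
  refine hlim.congr' ?_
  filter_upwards [hFG, hlu.eventually hFG, hh0, hlu.eventually hh0] with u h1 h2 h3 h4
  rw [h1, h2]
  field_simp

theorem isEquivalent_of_eventually_le_add {α : Type*} {l : Filter α} {f g a b : α → ℝ}
    (ha : a =o[l] g) (hb : b =o[l] g) (hg : ∀ᶠ x in l, 0 ≤ g x)
    (hup : ∀ᶠ ε in 𝓝[>] 0, ∀ᶠ x in l, f x ≤ a x + (1 + ε) * g x)
    (hlow : ∀ᶠ ε in 𝓝[>] 0, ∀ᶠ x in l, (1 - ε) * g x ≤ f x + b x) : f ~[l] g := by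
  refine isLittleO_iff.2 fun c hc => ?_
  obtain ⟨ε, ⟨hupε, hlowε⟩, hεc⟩ := ((hup.and hlow).and
    (nhdsWithin_le_nhds (eventually_lt_nhds (by positivity : (0 : ℝ) < c / 3)))).exists
  filter_upwards [hupε, hlowε, ha.bound (by positivity : 0 < c / 3),
    hb.bound (by positivity : 0 < c / 3), hg] with x h1 h2 h3 h4 h5
  simp only [Real.norm_eq_abs, Pi.sub_apply, abs_of_nonneg h5] at h3 h4 ⊢
  have hεg : ε * g x ≤ c / 3 * g x := mul_le_mul_of_nonneg_right hεc.le h5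
  rw [abs_le]
  constructor <;> linarith [le_abs_self (a x), le_abs_self (b x), mul_nonneg hc.le h5]

section Tails

variable {Ω : Type*} {mΩ : MeasurableSpace Ω} {μ : Measure Ω}

theorem antitone_toReal_measure_gt [IsFiniteMeasure μ] (X : Ω → ℝ) :
    Antitone fun u => (μ {ω | X ω > u}).toReal := fun _ _ huv =>
  ENNReal.toReal_mono (measure_ne_top _ _) (measure_mono fun _ hω => huv.trans_lt hω)

theorem toReal_measure_gt_pos [IsFiniteMeasure μ] {X : Ω → ℝ}
    (hX : ∀ᶠ u in atTop, (μ {ω | X ω > u}).toReal ≠ 0) (u : ℝ) :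
    0 < (μ {ω | X ω > u}).toReal := by
  obtain ⟨v, hv, huv⟩ := (hX.and (eventually_ge_atTop u)).exists
  exact (ENNReal.toReal_nonneg.lt_of_ne' hv).trans_le (antitone_toReal_measure_gt X huv)

theorem measurable_measure_const_mul_gt [IsFiniteMeasure μ] {X : Ω → ℝ} (hX : Measurable X)
    (u : ℝ) : Measurable fun s : ℝ => μ {ω | s * X ω > u} := by
  have hE : MeasurableSet {p : ℝ × ℝ | p.1 * p.2 > u} :=
    measurableSet_lt measurable_const (by fun_prop)
  convert measurable_measure_prodMk_left (ν := μ.map X) hE with s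
  rw [Measure.map_apply hX (measurable_prodMk_left hE)]
  rfl

theorem measure_mul_gt_eq_lintegral [IsFiniteMeasure μ] {S X : Ω → ℝ} (hS : Measurable S)
    (hX : Measurable X) (hSX : IndepFun S X μ) (u : ℝ) :
    μ {ω | S ω * X ω > u} = ∫⁻ s, μ {ω | s * X ω > u} ∂μ.map S := by
  have hE : MeasurableSet {p : ℝ × ℝ | p.1 * p.2 > u} :=
    measurableSet_lt measurable_const (by fun_prop)
  rw [show {ω | S ω * X ω > u} = (fun ω => (S ω, X ω)) ⁻¹' {p | p.1 * p.2 > u} from rfl,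
    ← Measure.map_apply (hS.prodMk hX) hE,
    (indepFun_iff_map_prod_eq_prod_map_map hS.aemeasurable hX.aemeasurable).1 hSX,
    Measure.prod_apply hE]
  congr 1 with s
  rw [Measure.map_apply hX (measurable_prodMk_left hE)]
  rfl

theorem measure_const_mul_gt_le {X X' : Ω → ℝ} (hX0 : ∀ᵐ ω ∂μ, 0 ≤ X ω) {s u : ℝ}
    (hs : s ∈ Icc 0 1) (hu : 0 ≤ u) {c : ENNReal}
    (hc : ∀ v ∈ Icc u (2 * u), μ {ω | X ω > v} ≤ c * μ {ω | X' ω > v}) :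
    μ {ω | s * X ω > u} ≤ μ {ω | X ω > 2 * u} + c * μ {ω | s * X' ω > u} := by
  rcases le_or_gt s (1 / 2) with hs2 | hs2
  · refine le_add_right (measure_mono_ae ?_)
    filter_upwards [hX0] with ω hω (hsω : u < s * X ω)
    show 2 * u < X ω
    nlinarith
  · have hs0 : 0 < s := by linarith
    have hdiv : ∀ Z : Ω → ℝ, {ω | s * Z ω > u} = {ω | Z ω > u / s} := fun Z => by
      ext ω; simp [div_lt_iff₀ hs0, mul_comm]
    rw [hdiv, hdiv]
    refine le_add_left (hc _ ⟨(le_div_iff₀ hs0).2 ?_, (div_le_iff₀ hs0).2 ?_⟩) <;>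
      nlinarith [hs.2]

theorem measure_mul_gt_le [IsProbabilityMeasure μ] {S X X' : Ω → ℝ} (hS : Measurable S)
    (hX : Measurable X) (hX' : Measurable X') (hSX : IndepFun S X μ) (hSX' : IndepFun S X' μ)
    (hS01 : ∀ᵐ ω ∂μ, S ω ∈ Icc 0 1) (hX0 : ∀ᵐ ω ∂μ, 0 ≤ X ω) {u : ℝ} (hu : 0 ≤ u)
    {c : ENNReal}
    (hc : ∀ v ∈ Icc u (2 * u), μ {ω | X ω > v} ≤ c * μ {ω | X' ω > v}) :
    μ {ω | S ω * X ω > u} ≤ μ {ω | X ω > 2 * u} + c * μ {ω | S ω * X' ω > u} := by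
  have := Measure.isProbabilityMeasure_map (μ := μ) hS.aemeasurable
  have hS01' : ∀ᵐ s ∂μ.map S, s ∈ Icc 0 1 :=
    (ae_map_iff hS.aemeasurable measurableSet_Icc).2 hS01
  rw [measure_mul_gt_eq_lintegral hS hX hSX, measure_mul_gt_eq_lintegral hS hX' hSX']
  calc ∫⁻ s, μ {ω | s * X ω > u} ∂μ.map S
      ≤ ∫⁻ s, (μ {ω | X ω > 2 * u} + c * μ {ω | s * X' ω > u}) ∂μ.map S :=
        lintegral_mono_ae (hS01'.mono fun s hs => measure_const_mul_gt_le hX0 hs hu hc)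
    _ = μ {ω | X ω > 2 * u} + c * ∫⁻ s, μ {ω | s * X' ω > u} ∂μ.map S := by
        rw [lintegral_add_left measurable_const, lintegral_const, measure_univ, mul_one,
          lintegral_const_mul _ (measurable_measure_const_mul_gt hX' u)]

theorem toReal_measure_mul_gt_le [IsProbabilityMeasure μ] {S X X' : Ω → ℝ} (hS : Measurable S)
    (hX : Measurable X) (hX' : Measurable X') (hSX : IndepFun S X μ) (hSX' : IndepFun S X' μ)
    (hS01 : ∀ᵐ ω ∂μ, S ω ∈ Icc 0 1) (hX0 : ∀ᵐ ω ∂μ, 0 ≤ X ω) {u c : ℝ} (hu : 0 ≤ u)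
    (hc : 0 ≤ c)
    (hXX' : ∀ v ∈ Icc u (2 * u),
      (μ {ω | X ω > v}).toReal ≤ c * (μ {ω | X' ω > v}).toReal) :
    (μ {ω | S ω * X ω > u}).toReal
      ≤ (μ {ω | X ω > 2 * u}).toReal + c * (μ {ω | S ω * X' ω > u}).toReal := by
  have key := measure_mul_gt_le hS hX hX' hSX hSX' hS01 hX0 hu (c := ENNReal.ofReal c)
    fun v hv => by
      rw [← ENNReal.ofReal_toReal (measure_ne_top μ {ω | X ω > v}),
        ← ENNReal.ofReal_toReal (measure_ne_top μ {ω | X' ω > v}), ← ENNReal.ofReal_mul hc]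
      exact ENNReal.ofReal_le_ofReal (hXX' v hv)
  have := ENNReal.toReal_mono (by finiteness) key
  rwa [ENNReal.toReal_add (by finiteness) (by finiteness), ENNReal.toReal_mul,
    ENNReal.toReal_ofReal hc] at this

theorem measure_gt_mul_measure_gt_le {S X : Ω → ℝ} (hSX : IndepFun S X μ) {w u : ℝ}
    (hw : 0 < w) (hu : 0 ≤ u) :
    μ {ω | S ω > w} * μ {ω | X ω > u / w} ≤ μ {ω | S ω * X ω > u} := by
  change μ (S ⁻¹' Ioi w) * μ (X ⁻¹' Ioi (u / w)) ≤ _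
  rw [← hSX.measure_inter_preimage_eq_mul _ _ measurableSet_Ioi measurableSet_Ioi]
  refine measure_mono fun ω ⟨(hSω : w < S ω), (hXω : u / w < X ω)⟩ => ?_
  show u < S ω * X ω
  calc u = w * (u / w) := (mul_div_cancel₀ u hw.ne').symm
    _ < S ω * X ω := mul_lt_mul'' hSω hXω hw.le (div_nonneg hu hw.le)

theorem isLittleO_toReal_measure_gt_two_mul [IsFiniteMeasure μ] {S X : Ω → ℝ}
    (hSX : IndepFun S X μ) {w : ℝ} (hw : 1 / 2 < w) (hSw : 0 < μ {ω | S ω > w})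
    (hX : RapidlyVarying fun u => (μ {ω | X ω > u}).toReal) :
    (fun u => (μ {ω | X ω > 2 * u}).toReal) =o[atTop]
      fun u => (μ {ω | S ω * X ω > u}).toReal := by
  set G : ℝ → ℝ := fun u => (μ {ω | X ω > u}).toReal
  have hw0 : 0 < w := by linarith
  have h1 : (fun u => G (2 * u)) =o[atTop] fun u => G (u / w) := by
    refine (isLittleO_iff_tendsto' ?_).2 (((hX (2 * w) (by linarith)).comp
      (tendsto_id.atTop_div_const hw0)).congr fun u => ?_)
    · filter_upwards [eventually_ge_atTop 0] with u hu h0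
      refine le_antisymm (h0 ▸ antitone_toReal_measure_gt X ?_) ENNReal.toReal_nonneg
      rw [div_le_iff₀ hw0]
      nlinarith
    · simp only [Function.comp, id, G]
      rw [mul_assoc, mul_div_cancel₀ u hw0.ne']
  have h2 : (fun u => G (u / w)) =O[atTop] fun u => (μ {ω | S ω * X ω > u}).toReal := by
    have hp : 0 < (μ {ω | S ω > w}).toReal := ENNReal.toReal_pos hSw.ne' (measure_ne_top _ _)
    refine IsBigO.of_bound (μ {ω | S ω > w}).toReal⁻¹ ?_
    filter_upwards [eventually_ge_atTop 0] with u hu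
    have := ENNReal.toReal_mono (measure_ne_top _ _) (measure_gt_mul_measure_gt_le hSX hw0 hu)
    rw [ENNReal.toReal_mul] at this
    rw [Real.norm_of_nonneg ENNReal.toReal_nonneg, Real.norm_of_nonneg ENNReal.toReal_nonneg,
      inv_mul_eq_div, le_div_iff₀ hp, mul_comm]
    exact this
  exact h1.trans_isBigO h2

theorem isEquivalent_toReal_measure_mul_gt [IsProbabilityMeasure μ] {S X X' : Ω → ℝ}
    (hS : Measurable S) (hX : Measurable X) (hX' : Measurable X')
    (hSX : IndepFun S X μ) (hSX' : IndepFun S X' μ) (hS01 : ∀ᵐ ω ∂μ, S ω ∈ Icc 0 1)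
    (hSend : ∀ w < 1, 0 < μ {ω | S ω > w}) (hX0 : ∀ᵐ ω ∂μ, 0 ≤ X ω)
    (hX'0 : ∀ᵐ ω ∂μ, 0 ≤ X' ω) (hrap : RapidlyVarying fun u => (μ {ω | X ω > u}).toReal)
    {h : ℝ → ℝ} (hh : RegularlyVarying h 0) (hmeas : Measurable h) (hpos : ∀ u > 0, 0 < h u)
    (htail : ∀ v, (μ {ω | X ω > v}).toReal = h v * (μ {ω | X' ω > v}).toReal) :
    (fun u => (μ {ω | S ω * X ω > u}).toReal) ~[atTop]
      fun u => h u * (μ {ω | S ω * X' ω > u}).toReal := by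
  have hh0 : ∀ᶠ u in atTop, h u ≠ 0 :=
    (eventually_gt_atTop 0).mono fun u hu => (hpos u hu).ne'
  have hG2 := isLittleO_toReal_measure_gt_two_mul hSX' (w := 3 / 4) (by norm_num)
    (hSend _ (by norm_num)) (hrap.of_eq_mul hh (.of_forall htail) hh0)
  have hh2 : (fun u => h (2 * u)) =O[atTop] h :=
    isBigO_of_div_tendsto_nhds (hh0.mono fun u hu h0 => absurd h0 hu) 1
      (by simpa only [rpow_zero, mul_comm, Pi.div_def] using hh 2 two_pos)
  refine isEquivalent_of_eventually_le_add (a := fun u => (μ {ω | X ω > 2 * u}).toReal)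
    (b := fun u => h u * (μ {ω | X' ω > 2 * u}).toReal) ?_
    ((isBigO_refl h atTop).mul_isLittleO hG2) ?_ ?_ ?_
  · simpa only [htail] using hh2.mul_isLittleO hG2
  · filter_upwards [eventually_gt_atTop 0] with u hu
    exact mul_nonneg (hpos u hu).le ENNReal.toReal_nonneg
  · filter_upwards [self_mem_nhdsWithin] with ε (hε : 0 < ε)
    filter_upwards [hh.eventually_abs_sub_le hmeas hpos hε 2, eventually_gt_atTop 0]
      with u hu hu0
    rw [← mul_assoc]
    refine toReal_measure_mul_gt_le hS hX hX' hSX hSX' hS01 hX0 hu0.le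
      (by nlinarith [hpos u hu0]) fun v hv => ?_
    rw [htail]
    exact mul_le_mul_of_nonneg_right (by linarith [(abs_le.1 (hu v hv)).2])
      ENNReal.toReal_nonneg
  · filter_upwards [Ioo_mem_nhdsGT one_pos] with ε hε
    filter_upwards [hh.eventually_abs_sub_le hmeas hpos hε.1 2, eventually_gt_atTop 0]
      with u hu hu0
    have hc : 0 < (1 - ε) * h u := mul_pos (by linarith [hε.2]) (hpos u hu0)
    have key := toReal_measure_mul_gt_le hS hX' hX hSX' hSX hS01 hX'0 hu0.le
      (inv_nonneg.2 hc.le) fun v hv => by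
        rw [htail, ← mul_assoc]
        refine le_mul_of_one_le_left ENNReal.toReal_nonneg ((le_inv_mul_iff₀ hc).2 ?_)
        linarith [(abs_le.1 (hu v hv)).1]
    have hG : 0 ≤ (μ {ω | X' ω > 2 * u}).toReal := ENNReal.toReal_nonneg
    calc (1 - ε) * (h u * (μ {ω | S ω * X' ω > u}).toReal)
        = (1 - ε) * h u * (μ {ω | S ω * X' ω > u}).toReal := by ring
      _ ≤ (1 - ε) * h u * ((μ {ω | X' ω > 2 * u}).toReal
            + ((1 - ε) * h u)⁻¹ * (μ {ω | S ω * X ω > u}).toReal) :=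
          mul_le_mul_of_nonneg_left key hc.le
      _ = (1 - ε) * h u * (μ {ω | X' ω > 2 * u}).toReal
            + (μ {ω | S ω * X ω > u}).toReal := by
          rw [mul_add, mul_inv_cancel_left₀ hc.ne']
      _ ≤ _ := by
          have : (1 - ε) * h u ≤ h u := by nlinarith [hpos u hu0, hε.1]
          linarith [mul_le_mul_of_nonneg_right this hG]

end Tails

theorem random_contraction_tail_equivalence_general
    {Ω : Type*} [MeasureSpace Ω] [IsProbabilityMeasure (ℙ : Measure Ω)]
    (S Y Ystar : Ω → ℝ) (hS : Measurable S) (hY : Measurable Y) (hYstar : Measurable Ystar)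
    (hindep : iIndepFun (m := fun _ : Fin 3 => Real.measurableSpace) ![S, Y, Ystar] ℙ)
    (hS0 : ∀ᵐ ω ∂ℙ, 0 ≤ S ω) (hS1 : ∀ᵐ ω ∂ℙ, S ω ≤ 1)
    (hSend : ∀ w : ℝ, w < 1 → 0 < ℙ {ω | S ω > w})
    (hYpos : ∀ᵐ ω ∂ℙ, 0 ≤ Y ω) (hYstarpos : ∀ᵐ ω ∂ℙ, 0 ≤ Ystar ω)
    (hrap : ∀ l : ℝ, 1 < l →
      Tendsto (fun u => (ℙ {ω | Y ω > l * u}).toReal / (ℙ {ω | Y ω > u}).toReal)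
        atTop (𝓝 0))
    (L : ℝ → ℝ) (hL : RegularlyVarying L 0)
    (htailEq : Tendsto (fun u => (ℙ {ω | Y ω > u}).toReal /
        (L u * (ℙ {ω | Ystar ω > u}).toReal)) atTop (𝓝 1)) :
    Tendsto (fun u => (ℙ {ω | S ω * Y ω > u}).toReal /
        (L u * (ℙ {ω | S ω * Ystar ω > u}).toReal)) atTop (𝓝 1) := by
  set F : ℝ → ℝ := fun u => (ℙ {ω | Y ω > u}).toReal
  set G : ℝ → ℝ := fun u => (ℙ {ω | Ystar ω > u}).toReal
  have hSY : IndepFun S Y ℙ := by simpa using hindep.indepFun (i := 0) (j := 1) (by decide)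
  have hSYstar : IndepFun S Ystar ℙ := by
    simpa using hindep.indepFun (i := 0) (j := 2) (by decide)
  have hne : ∀ᶠ u in atTop, F u ≠ 0 ∧ L u * G u ≠ 0 :=
    (htailEq.eventually_ne one_ne_zero).mono fun u hu => div_ne_zero_iff.1 hu
  have hFpos := toReal_measure_gt_pos (hne.mono fun u hu => hu.1)
  have hGpos := toReal_measure_gt_pos (hne.mono fun u hu => right_ne_zero_of_mul hu.2)
  have hhL : (fun u => F u / G u) ~[atTop] L :=
    isEquivalent_of_tendsto_one (htailEq.congr fun u => by
      show _ = F u / G u / L u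
      rw [div_div, mul_comm (G u)])
  have hT := isEquivalent_toReal_measure_mul_gt hS hY hYstar hSY hSYstar (hS0.and hS1) hSend
    hYpos hYstarpos hrap (hL.of_isEquivalent hhL.symm)
    ((antitone_toReal_measure_gt Y).measurable.div (antitone_toReal_measure_gt Ystar).measurable)
    (fun u _ => div_pos (hFpos u) (hGpos u)) fun v => (div_mul_cancel₀ _ (hGpos v).ne').symm
  have hden : ∀ᶠ u in atTop, L u * (ℙ {ω | S ω * Ystar ω > u}).toReal ≠ 0 := by
    filter_upwards [hne, eventually_ge_atTop 0] with u hu hu0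
    have hGu : ℙ {ω | Ystar ω > u / (3 / 4)} ≠ 0 := (ENNReal.toReal_pos_iff.1 (hGpos _)).1.ne'
    have hT : 0 < ℙ {ω | S ω * Ystar ω > u} :=
      (ENNReal.mul_pos (hSend _ (by norm_num)).ne' hGu).trans_le
        (measure_gt_mul_measure_gt_le hSYstar (by norm_num) hu0)
    exact mul_ne_zero (left_ne_zero_of_mul hu.2)
      (ENNReal.toReal_ne_zero.2 ⟨hT.ne', measure_ne_top _ _⟩)
  exact (isEquivalent_iff_tendsto_one hden).1 (hT.trans (hhL.mul IsEquivalent.refl))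

theorem random_contraction_tail_equivalence
    {Ω : Type*} [MeasureSpace Ω] [IsProbabilityMeasure (ℙ : Measure Ω)]
    (S Y Ystar : Ω → ℝ) (hS : Measurable S) (hY : Measurable Y) (hYstar : Measurable Ystar)
    (hindep : iIndepFun (m := fun _ : Fin 3 => Real.measurableSpace) ![S, Y, Ystar] ℙ)
    (hS0 : ∀ᵐ ω ∂ℙ, 0 ≤ S ω) (hS1 : ∀ᵐ ω ∂ℙ, S ω ≤ 1)
    (hSend : ∀ w : ℝ, w < 1 → 0 < ℙ {ω | S ω > w})
    (hYpos : ∀ᵐ ω ∂ℙ, 0 ≤ Y ω) (hYstarpos : ∀ᵐ ω ∂ℙ, 0 ≤ Ystar ω)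
    (hYend : ∀ u : ℝ, 0 < ℙ {ω | Y ω > u})
    (hrap : ∀ l : ℝ, 1 < l →
      Tendsto (fun u => (ℙ {ω | Y ω > l * u}).toReal / (ℙ {ω | Y ω > u}).toReal)
        atTop (𝓝 0))
    (L : ℝ → ℝ) (hLpos : ∀ u > 0, 0 < L u) (hL : RegularlyVarying L 0)
    (htailEq : Tendsto (fun u => (ℙ {ω | Y ω > u}).toReal /
        (L u * (ℙ {ω | Ystar ω > u}).toReal)) atTop (𝓝 1)) :
    Tendsto (fun u => (ℙ {ω | S ω * Y ω > u}).toReal /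
        (L u * (ℙ {ω | S ω * Ystar ω > u}).toReal)) atTop (𝓝 1) :=
  random_contraction_tail_equivalence_general S Y Ystar hS hY hYstar hindep hS0 hS1 hSend hYpos
    hYstarpos hrap L hL htailEq
end

section
/- Let Y1, Y2 be independent positive random variables satisfying log P(Y_i > u)/u^{p_i} → -L_i as u → ∞ (i = 1, 2) for positive constants p_i, L_i. Then log P(Y1Y2 > u)/u^{p1 p2/(p1+p2)} → -B as u → ∞, where A = ((p1 L1)/(p2 L2))^{1/(p1+p2)} and B = L1 A^{-p1} + L2 A^{p2}. -/
/-!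
Write `q = p₁ p₂ / (p₁ + p₂)` and `r(c) = L₁ c^{-p₁} + L₂ c^{p₂}`. For fixed `c > 0` the event
`{Y₁ > c⁻¹ u^{p₂/(p₁+p₂)}, Y₂ > c u^{p₁/(p₁+p₂)}}` lies in `{Y₁ Y₂ > u}` and has probability
`exp (-(r(c) + o(1)) u^q)`; this gives the lower bound with `c = A`. Conversely, cutting the
range of `Y₁` at finitely many points `c_k⁻¹ u^{p₂/(p₁+p₂)}` covers `{Y₁ Y₂ > u}` by finitely
many such events, and a grid fine in `c^{-p₁}` makes each of their rates at least `inf r - ε`.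
Finitely many terms do not change the exponential rate, and `r` is minimal at its stationary
point `A`, where `r(A) = B`.
-/

open Filter Topology Real MeasureTheory ProbabilityTheory

def HasLogWeibullTail (F : ℝ → ℝ) (p L : ℝ) : Prop :=
  Tendsto (fun u => log (F u) / u ^ p) atTop (𝓝 (-L))

namespace HasLogWeibullTail

variable {F G : ℝ → ℝ} {p L M : ℝ}

theorem eventually_ne_zero (h : HasLogWeibullTail F p L) (hL : L ≠ 0) :
    ∀ᶠ u in atTop, F u ≠ 0 := by
  filter_upwards [h.eventually_ne (neg_ne_zero.2 hL)] with u hu hF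
  simp [hF] at hu

theorem eventually_le_exp (h : HasLogWeibullTail F p L) {m : ℝ} (hm : -L < m) :
    ∀ᶠ u in atTop, F u ≤ exp (m * u ^ p) := by
  filter_upwards [h.eventually_lt_const hm, eventually_gt_atTop 0] with u hu hu0
  calc F u ≤ exp (log (F u)) := le_exp_log _
    _ ≤ exp (m * u ^ p) := exp_le_exp.2 ((div_lt_iff₀ (rpow_pos_of_pos hu0 p)).1 hu).le

theorem eventually_lt_log_div_of_le {P : ℝ → ℝ} (h : HasLogWeibullTail F p L)
    (hF : ∀ᶠ u in atTop, 0 < F u) (hFP : ∀ᶠ u in atTop, F u ≤ P u) {b : ℝ} (hb : b < -L) :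
    ∀ᶠ u in atTop, b < log (P u) / u ^ p := by
  filter_upwards [h.eventually_const_lt hb, hF, hFP, eventually_gt_atTop 0] with u hu hFu hFPu hu0
  exact hu.trans_le <| div_le_div_of_nonneg_right (log_le_log hFu hFPu) (rpow_nonneg hu0.le p)

theorem comp_const_mul_rpow (h : HasLogWeibullTail F p L) {c β : ℝ} (hc : 0 < c) (hβ : 0 < β) :
    HasLogWeibullTail (fun u => F (c * u ^ β)) (β * p) (L * c ^ p) := by
  have hscale : Tendsto (fun u : ℝ => c * u ^ β) atTop atTop :=
    (tendsto_rpow_atTop hβ).const_mul_atTop hc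
  have hlim := (h.comp hscale).mul_const (c ^ p)
  rw [neg_mul] at hlim
  refine hlim.congr' ?_
  filter_upwards [eventually_gt_atTop 0] with u hu
  have hcp : c ^ p ≠ 0 := (rpow_pos_of_pos hc p).ne'
  have hup : u ^ (β * p) ≠ 0 := (rpow_pos_of_pos hu _).ne'
  simp only [Function.comp_apply]
  rw [mul_rpow hc.le (rpow_nonneg hu.le β), ← rpow_mul hu.le]
  field_simp

protected theorem mul (hF : HasLogWeibullTail F p L) (hG : HasLogWeibullTail G p M) (hL : L ≠ 0)
    (hM : M ≠ 0) : HasLogWeibullTail (fun u => F u * G u) p (L + M) := by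
  have hlim := hF.add hG
  rw [← neg_add] at hlim
  refine hlim.congr' ?_
  filter_upwards [hF.eventually_ne_zero hL, hG.eventually_ne_zero hM] with u hFu hGu
  rw [log_mul hFu hGu, add_div]

end HasLogWeibullTail

theorem eventually_log_div_rpow_lt_of_le_mul_exp {P : ℝ → ℝ} {p C m b : ℝ} (hp : 0 < p)
    (hP : ∀ᶠ u in atTop, 0 < P u) (hPC : ∀ᶠ u in atTop, P u ≤ C * exp (m * u ^ p)) (hmb : m < b) :
    ∀ᶠ u in atTop, log (P u) / u ^ p < b := by
  have hC : Tendsto (fun u : ℝ => log C / u ^ p) atTop (𝓝 0) :=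
    tendsto_const_nhds.div_atTop (tendsto_rpow_atTop hp)
  filter_upwards [hP, hPC, hC.eventually_lt_const (sub_pos.2 hmb), eventually_gt_atTop 0]
    with u hPu hPCu hCu hu
  have hup : 0 < u ^ p := rpow_pos_of_pos hu p
  have hCpos : 0 < C := pos_of_mul_pos_left (hPu.trans_le hPCu) (exp_pos _).le
  have hlogP : log (P u) ≤ log C + m * u ^ p := by
    calc log (P u) ≤ log (C * exp (m * u ^ p)) := log_le_log hPu hPCu
      _ = log C + m * u ^ p := by rw [log_mul hCpos.ne' (exp_pos _).ne', log_exp]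
  rw [div_lt_iff₀ hup] at hCu ⊢
  linarith

theorem rpow_mul_add_one_le_rpow {a c : ℝ} (ha : 0 < a) (hc : 0 < c) (p : ℝ) :
    a ^ p * (p * log (c / a) + 1) ≤ c ^ p := by
  have hca : c ^ p = a ^ p * exp (p * log (c / a)) := by
    conv_lhs => rw [← mul_div_cancel₀ c ha.ne']
    rw [mul_rpow ha.le (div_pos hc ha).le, rpow_def_of_pos (div_pos hc ha), mul_comm (log _)]
  rw [hca]
  exact mul_le_mul_of_nonneg_left (by linarith [add_one_le_exp (p * log (c / a))])
    (rpow_nonneg ha.le p)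

/-- `productRate L₁ L₂ p₁ p₂ c` is the exponential rate, on the scale `u ^ (p₁ * p₂ / (p₁ + p₂))`,
of `P(Y₁ > c⁻¹ u ^ (p₂ / (p₁ + p₂)), Y₂ > c u ^ (p₁ / (p₁ + p₂)))`. -/
noncomputable def productRate (L₁ L₂ p₁ p₂ c : ℝ) : ℝ :=
  L₁ * c ^ (-p₁) + L₂ * c ^ p₂

section productRate

variable {L₁ L₂ p₁ p₂ : ℝ}

/-- `productRate` is convex in `log c`, so a stationary point is a minimum. -/
theorem isMinOn_productRate_of_stationary {a : ℝ} (hL₁ : 0 ≤ L₁) (hL₂ : 0 ≤ L₂) (ha : 0 < a)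
    (hstat : p₁ * (L₁ * a ^ (-p₁)) = p₂ * (L₂ * a ^ p₂)) :
    IsMinOn (productRate L₁ L₂ p₁ p₂) (Set.Ioi 0) a := by
  refine isMinOn_iff.2 fun c (hc : 0 < c) => ?_
  have h₁ := mul_le_mul_of_nonneg_left (rpow_mul_add_one_le_rpow ha hc (-p₁)) hL₁
  have h₂ := mul_le_mul_of_nonneg_left (rpow_mul_add_one_le_rpow ha hc p₂) hL₂
  have hstat' : p₁ * (L₁ * a ^ (-p₁)) * log (c / a) = p₂ * (L₂ * a ^ p₂) * log (c / a) := by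
    rw [hstat]
  unfold productRate
  linarith

theorem isMinOn_productRate (hL₁ : 0 < L₁) (hL₂ : 0 < L₂) (hp₁ : 0 < p₁) (hp₂ : 0 < p₂) :
    IsMinOn (productRate L₁ L₂ p₁ p₂) (Set.Ioi 0)
      (((p₁ * L₁) / (p₂ * L₂)) ^ (1 / (p₁ + p₂))) := by
  set A := ((p₁ * L₁) / (p₂ * L₂)) ^ (1 / (p₁ + p₂))
  have hA : 0 < A := rpow_pos_of_pos (by positivity) _
  have hApow : A ^ (p₁ + p₂) = p₁ * L₁ / (p₂ * L₂) := by
    rw [← rpow_mul (by positivity), one_div_mul_cancel (by positivity), rpow_one]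
  refine isMinOn_productRate_of_stationary hL₁.le hL₂.le hA ?_
  have hsplit : A ^ p₂ = A ^ (p₁ + p₂) * A ^ (-p₁) := by
    rw [← rpow_add hA]
    ring_nf
  rw [hsplit, hApow]
  field_simp

/-- The grid has `c k ^ (-p₁)` in arithmetic progression of step `ε / (2 L₁)`, so the `k`-th rate
is within `ε / 2` of `productRate (c (k + 1)) ≥ productRate a`. -/
theorem exists_grid_lt_productRate {a ε : ℝ} (hL₁ : 0 < L₁) (hL₂ : 0 < L₂) (hp₁ : 0 < p₁)
    (hp₂ : 0 < p₂) (hmin : IsMinOn (productRate L₁ L₂ p₁ p₂) (Set.Ioi 0) a) (hε : 0 < ε) :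
    ∃ (n : ℕ) (c : ℕ → ℝ), (∀ k, 0 < c k) ∧ productRate L₁ L₂ p₁ p₂ a - ε < L₂ * c 0 ^ p₂ ∧
      productRate L₁ L₂ p₁ p₂ a - ε < L₁ * c n ^ (-p₁) ∧
      ∀ k < n, productRate L₁ L₂ p₁ p₂ a - ε < L₁ * c k ^ (-p₁) + L₂ * c (k + 1) ^ p₂ := by
  set B := productRate L₁ L₂ p₁ p₂ a
  obtain ⟨c₀, hc₀B, hc₀⟩ : ∃ c₀, B - ε < L₂ * c₀ ^ p₂ ∧ 0 < c₀ :=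
    (((tendsto_rpow_atTop hp₂).const_mul_atTop hL₂).eventually_gt_atTop _).and
      (eventually_gt_atTop 0) |>.exists
  obtain ⟨n, hn⟩ := exists_nat_gt ((B - ε) / (ε / 2))
  set t := ε / (2 * L₁) with ht
  have hLt : L₁ * t = ε / 2 := by rw [ht]; field_simp
  have hs : ∀ k : ℕ, 0 < c₀ ^ (-p₁) + k * t := fun k => by positivity
  have hcs : ∀ k : ℕ, ((c₀ ^ (-p₁) + k * t) ^ (-p₁)⁻¹) ^ (-p₁) = c₀ ^ (-p₁) + k * t :=
    fun k => rpow_inv_rpow (hs k).le (by linarith)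
  refine ⟨n, fun k => (c₀ ^ (-p₁) + k * t) ^ (-p₁)⁻¹, fun k => rpow_pos_of_pos (hs k) _, ?_, ?_, ?_⟩
  · simp only [Nat.cast_zero, zero_mul, add_zero]
    rwa [rpow_rpow_inv hc₀.le (neg_ne_zero.2 hp₁.ne')]
  · have hn' : B - ε < n * (ε / 2) := (div_lt_iff₀ (by positivity)).1 hn
    rw [hcs n, mul_add, mul_left_comm, hLt]
    linarith [mul_pos hL₁ (rpow_pos_of_pos hc₀ (-p₁))]
  · intro k _
    have hnext : B ≤ productRate L₁ L₂ p₁ p₂ _ :=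
      isMinOn_iff.1 hmin _ (rpow_pos_of_pos (hs (k + 1)) (-p₁)⁻¹)
    rw [productRate] at hnext
    simp only [hcs] at hnext ⊢
    push_cast at hnext ⊢
    linarith

end productRate

theorem exists_lt_and_le_succ {α : Type*} [LinearOrder α] {f : ℕ → α} {y : α} {n : ℕ}
    (h0 : f 0 < y) (hn : y ≤ f n) : ∃ k < n, f k < y ∧ y ≤ f (k + 1) := by
  induction n with
  | zero => exact absurd (h0.trans_le hn) (lt_irrefl _)
  | succ m ih =>
    by_cases hm : y ≤ f m
    · obtain ⟨k, hk, h⟩ := ih hm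
      exact ⟨k, hk.trans (Nat.lt_succ_self m), h⟩
    · exact ⟨m, Nat.lt_succ_self m, not_le.1 hm, hn⟩

theorem lt_mul_cases {a b u : ℝ} {n : ℕ} {x y : ℕ → ℝ} (ha : 0 < a) (hu : 0 ≤ u) (hab : u < a * b)
    (hxy : ∀ k ≤ n, x k * y k ≤ u) :
    y 0 < b ∨ x n < a ∨ ∃ k < n, x k < a ∧ y (k + 1) < b := by
  have hy : ∀ k ≤ n, a ≤ x k → y k < b := fun k hk hak => by
    by_contra! hb
    rcases le_or_gt 0 b with hb0 | hb0
    · nlinarith [hxy k hk, mul_le_mul hak hb hb0 (ha.le.trans hak)]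
    · nlinarith [mul_neg_of_pos_of_neg ha hb0]
  by_cases htop : x n < a
  · exact Or.inr (Or.inl htop)
  by_cases hbot : a ≤ x 0
  · exact Or.inl (hy 0 (Nat.zero_le n) hbot)
  obtain ⟨k, hk, hxk, hxk'⟩ := exists_lt_and_le_succ (not_le.1 hbot) (not_lt.1 htop)
  exact Or.inr (Or.inr ⟨k, hk, hxk, hy (k + 1) hk hxk'⟩)

namespace ProbabilityTheory.IndepFun

variable {Ω : Type*} [MeasurableSpace Ω] {μ : Measure Ω} {X Y : Ω → ℝ}

theorem measureReal_inter_preimage_eq_mul {β β' : Type*} [MeasurableSpace β] [MeasurableSpace β']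
    {f : Ω → β} {g : Ω → β'} (h : IndepFun f g μ) {s : Set β} {t : Set β'} (hs : MeasurableSet s)
    (ht : MeasurableSet t) : μ.real (f ⁻¹' s ∩ g ⁻¹' t) = μ.real (f ⁻¹' s) * μ.real (g ⁻¹' t) := by
  simp only [Measure.real, h.measure_inter_preimage_eq_mul s t hs ht, ENNReal.toReal_mul]

theorem measureReal_lt_mul_measureReal_lt_le [IsFiniteMeasure μ] (hXY : IndepFun X Y μ)
    {x y : ℝ} (hx : 0 ≤ x) (hy : 0 ≤ y) :
    μ.real {ω | x < X ω} * μ.real {ω | y < Y ω} ≤ μ.real {ω | x * y < X ω * Y ω} :=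
  calc μ.real {ω | x < X ω} * μ.real {ω | y < Y ω}
      = μ.real (X ⁻¹' Set.Ioi x ∩ Y ⁻¹' Set.Ioi y) :=
        (hXY.measureReal_inter_preimage_eq_mul measurableSet_Ioi measurableSet_Ioi).symm
    _ ≤ μ.real {ω | x * y < X ω * Y ω} :=
        measureReal_mono fun _ ⟨h₁, h₂⟩ => mul_lt_mul'' h₁ h₂ hx hy

theorem measureReal_lt_mul_le_sum [IsFiniteMeasure μ] (hXY : IndepFun X Y μ)
    (hX : ∀ᵐ ω ∂μ, 0 < X ω) {u : ℝ} (hu : 0 ≤ u) {n : ℕ} {x y : ℕ → ℝ}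
    (hxy : ∀ k ≤ n, x k * y k ≤ u) :
    μ.real {ω | u < X ω * Y ω} ≤ μ.real {ω | y 0 < Y ω} + μ.real {ω | x n < X ω} +
      ∑ k ∈ Finset.range n, μ.real {ω | x k < X ω} * μ.real {ω | y (k + 1) < Y ω} := by
  have hcover : {ω | u < X ω * Y ω} ≤ᵐ[μ] (({ω | y 0 < Y ω} ∪ {ω | x n < X ω}) ∪
      ⋃ k ∈ Finset.range n, {ω | x k < X ω} ∩ {ω | y (k + 1) < Y ω} : Set Ω) := by
    filter_upwards [hX] with ω hω hmem
    rcases lt_mul_cases hω hu hmem hxy with h | h | ⟨k, hk, hxk, hyk⟩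
    · exact Or.inl (Or.inl h)
    · exact Or.inl (Or.inr h)
    · exact Or.inr (Set.mem_iUnion₂.2 ⟨k, Finset.mem_range.2 hk, hxk, hyk⟩)
  calc μ.real {ω | u < X ω * Y ω}
      ≤ μ.real (({ω | y 0 < Y ω} ∪ {ω | x n < X ω}) ∪
          ⋃ k ∈ Finset.range n, {ω | x k < X ω} ∩ {ω | y (k + 1) < Y ω}) :=
        ENNReal.toReal_mono (measure_ne_top _ _) (measure_mono_ae hcover)
    _ ≤ μ.real {ω | y 0 < Y ω} + μ.real {ω | x n < X ω} +
          ∑ k ∈ Finset.range n, μ.real ({ω | x k < X ω} ∩ {ω | y (k + 1) < Y ω}) :=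
        (measureReal_union_le _ _).trans
          (add_le_add (measureReal_union_le _ _) (measureReal_biUnion_finset_le _ _))
    _ = _ := by
        congr 1
        exact Finset.sum_congr rfl fun k _ =>
          hXY.measureReal_inter_preimage_eq_mul measurableSet_Ioi measurableSet_Ioi

end ProbabilityTheory.IndepFun

section ProductTail

variable {F₁ F₂ P : ℝ → ℝ} {L₁ L₂ p₁ p₂ c : ℝ}

theorem HasLogWeibullTail.comp_inv_mul_rpow_div_add (h : HasLogWeibullTail F₁ p₁ L₁)
    (hp₁ : 0 < p₁) (hp₂ : 0 < p₂) (hc : 0 < c) :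
    HasLogWeibullTail (fun u => F₁ (c⁻¹ * u ^ (p₂ / (p₁ + p₂)))) (p₁ * p₂ / (p₁ + p₂))
      (L₁ * c ^ (-p₁)) := by
  convert h.comp_const_mul_rpow (inv_pos.2 hc) (by positivity : 0 < p₂ / (p₁ + p₂)) using 1
  · ring
  · rw [inv_rpow hc.le, rpow_neg hc.le]

theorem HasLogWeibullTail.comp_mul_rpow_div_add (h : HasLogWeibullTail F₂ p₂ L₂)
    (hp₁ : 0 < p₁) (hp₂ : 0 < p₂) (hc : 0 < c) :
    HasLogWeibullTail (fun u => F₂ (c * u ^ (p₁ / (p₁ + p₂)))) (p₁ * p₂ / (p₁ + p₂))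
      (L₂ * c ^ p₂) := by
  convert h.comp_const_mul_rpow hc (by positivity : 0 < p₁ / (p₁ + p₂)) using 1
  ring

theorem inv_mul_rpow_div_add_mul_mul_rpow_div_add {u : ℝ} (hu : 0 < u) (hc : c ≠ 0)
    (hp : p₁ + p₂ ≠ 0) : c⁻¹ * u ^ (p₂ / (p₁ + p₂)) * (c * u ^ (p₁ / (p₁ + p₂))) = u := by
  rw [mul_mul_mul_comm, inv_mul_cancel₀ hc, one_mul, ← rpow_add hu, ← add_div, add_comm,
    div_self hp, rpow_one]

theorem HasLogWeibullTail.eventually_log_div_lt_of_le_sum (h₁ : HasLogWeibullTail F₁ p₁ L₁)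
    (h₂ : HasLogWeibullTail F₂ p₂ L₂) (hL₁ : 0 < L₁) (hL₂ : 0 < L₂) (hp₁ : 0 < p₁)
    (hp₂ : 0 < p₂) {a : ℝ} (hmin : IsMinOn (productRate L₁ L₂ p₁ p₂) (Set.Ioi 0) a)
    (hP : ∀ᶠ u in atTop, 0 < P u)
    (hup : ∀ u, 0 ≤ u → ∀ (n : ℕ) (x y : ℕ → ℝ), (∀ k ≤ n, x k * y k ≤ u) →
      P u ≤ F₂ (y 0) + F₁ (x n) + ∑ k ∈ Finset.range n, F₁ (x k) * F₂ (y (k + 1)))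
    {b : ℝ} (hb : -productRate L₁ L₂ p₁ p₂ a < b) :
    ∀ᶠ u in atTop, log (P u) / u ^ (p₁ * p₂ / (p₁ + p₂)) < b := by
  set ε := (b + productRate L₁ L₂ p₁ p₂ a) / 2 with hε
  obtain ⟨n, c, hc, hfirst, hlast, hmiddle⟩ :=
    exists_grid_lt_productRate hL₁ hL₂ hp₁ hp₂ hmin (by rw [hε]; linarith : 0 < ε)
  set m := ε - productRate L₁ L₂ p₁ p₂ a with hm
  set x : ℝ → ℕ → ℝ := fun u k => (c k)⁻¹ * u ^ (p₂ / (p₁ + p₂))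
  set y : ℝ → ℕ → ℝ := fun u k => c k * u ^ (p₁ / (p₁ + p₂))
  have hx k := h₁.comp_inv_mul_rpow_div_add hp₁ hp₂ (hc k)
  have hy k := h₂.comp_mul_rpow_div_add hp₁ hp₂ (hc k)
  have hfirst_le := (hy 0).eventually_le_exp (m := m) (by linarith [hm])
  have hlast_le := (hx n).eventually_le_exp (m := m) (by linarith [hm])
  have hmiddle_le : ∀ᶠ u in atTop, ∀ k ∈ Finset.range n,
      F₁ (x u k) * F₂ (y u (k + 1)) ≤ exp (m * u ^ (p₁ * p₂ / (p₁ + p₂))) :=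
    (eventually_all_finset _).2 fun k hk =>
      ((hx k).mul (hy (k + 1)) (mul_pos hL₁ (rpow_pos_of_pos (hc k) _)).ne'
        (mul_pos hL₂ (rpow_pos_of_pos (hc (k + 1)) _)).ne').eventually_le_exp
        (by linarith [hm, hmiddle k (Finset.mem_range.1 hk)])
  refine eventually_log_div_rpow_lt_of_le_mul_exp (C := n + 2) (m := m) (by positivity) hP ?_
    (by linarith [hm, hε])
  filter_upwards [hfirst_le, hlast_le, hmiddle_le, eventually_gt_atTop 0] with u h0 hn hk hu
  calc P u ≤ F₂ (y u 0) + F₁ (x u n) + ∑ k ∈ Finset.range n, F₁ (x u k) * F₂ (y u (k + 1)) :=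
        hup u hu.le n (x u) (y u) fun k _ =>
          (inv_mul_rpow_div_add_mul_mul_rpow_div_add hu (hc k).ne' (by positivity)).le
    _ ≤ exp (m * u ^ (p₁ * p₂ / (p₁ + p₂))) + exp (m * u ^ (p₁ * p₂ / (p₁ + p₂))) +
          n * exp (m * u ^ (p₁ * p₂ / (p₁ + p₂))) := by
        gcongr
        simpa using Finset.sum_le_card_nsmul _ _ _ hk
    _ = (n + 2) * exp (m * u ^ (p₁ * p₂ / (p₁ + p₂))) := by ring

theorem HasLogWeibullTail.of_product_bounds (h₁ : HasLogWeibullTail F₁ p₁ L₁)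
    (h₂ : HasLogWeibullTail F₂ p₂ L₂) (hL₁ : 0 < L₁) (hL₂ : 0 < L₂) (hp₁ : 0 < p₁)
    (hp₂ : 0 < p₂) {a : ℝ} (ha : 0 < a) (hmin : IsMinOn (productRate L₁ L₂ p₁ p₂) (Set.Ioi 0) a)
    (hF₁ : ∀ x, 0 ≤ F₁ x) (hF₂ : ∀ y, 0 ≤ F₂ y)
    (hlow : ∀ x y, 0 ≤ x → 0 ≤ y → F₁ x * F₂ y ≤ P (x * y))
    (hup : ∀ u, 0 ≤ u → ∀ (n : ℕ) (x y : ℕ → ℝ), (∀ k ≤ n, x k * y k ≤ u) →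
      P u ≤ F₂ (y 0) + F₁ (x n) + ∑ k ∈ Finset.range n, F₁ (x k) * F₂ (y (k + 1))) :
    HasLogWeibullTail P (p₁ * p₂ / (p₁ + p₂)) (productRate L₁ L₂ p₁ p₂ a) := by
  have hG := (h₁.comp_inv_mul_rpow_div_add hp₁ hp₂ ha).mul (h₂.comp_mul_rpow_div_add hp₁ hp₂ ha)
    (by positivity) (by positivity)
  have hGpos : ∀ᶠ u in atTop, 0 < F₁ (a⁻¹ * u ^ (p₂ / (p₁ + p₂))) * F₂ (a * u ^ (p₁ / (p₁ + p₂))) :=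
    (hG.eventually_ne_zero (by positivity)).mono fun u hu =>
      (mul_nonneg (hF₁ _) (hF₂ _)).lt_of_ne' hu
  have hGP : ∀ᶠ u in atTop,
      F₁ (a⁻¹ * u ^ (p₂ / (p₁ + p₂))) * F₂ (a * u ^ (p₁ / (p₁ + p₂))) ≤ P u := by
    filter_upwards [eventually_gt_atTop 0] with u hu
    have hprod := hlow (a⁻¹ * u ^ (p₂ / (p₁ + p₂))) (a * u ^ (p₁ / (p₁ + p₂))) (by positivity)
      (by positivity)
    rwa [inv_mul_rpow_div_add_mul_mul_rpow_div_add hu ha.ne' (by positivity)] at hprod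
  have hP : ∀ᶠ u in atTop, 0 < P u := (hGpos.and hGP).mono fun _ h => h.1.trans_le h.2
  exact tendsto_order.2 ⟨fun b hb => hG.eventually_lt_log_div_of_le hGpos hGP hb,
    fun b hb => h₁.eventually_log_div_lt_of_le_sum h₂ hL₁ hL₂ hp₁ hp₂ hmin hP hup hb⟩

end ProductTail

theorem logWeibullian_product_general
    {Ω : Type*} [MeasureSpace Ω] [IsProbabilityMeasure (ℙ : Measure Ω)]
    (Y₁ Y₂ : Ω → ℝ)
    (hindep : IndepFun Y₁ Y₂)
    (hY₁pos : ∀ᵐ ω ∂ℙ, 0 < Y₁ ω)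
    (L₁ L₂ p₁ p₂ : ℝ) (hL₁ : 0 < L₁) (hL₂ : 0 < L₂) (hp₁ : 0 < p₁) (hp₂ : 0 < p₂)
    (h₁ : Tendsto (fun u => Real.log (ℙ {ω | Y₁ ω > u}).toReal / u ^ p₁) atTop (𝓝 (-L₁)))
    (h₂ : Tendsto (fun u => Real.log (ℙ {ω | Y₂ ω > u}).toReal / u ^ p₂) atTop (𝓝 (-L₂)))
    (A B : ℝ) (hA : A = ((p₁ * L₁) / (p₂ * L₂)) ^ (1 / (p₁ + p₂)))
    (hB : B = L₁ * A ^ (-p₁) + L₂ * A ^ p₂) :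
    Tendsto (fun u => Real.log (ℙ {ω | Y₁ ω * Y₂ ω > u}).toReal /
        u ^ (p₁ * p₂ / (p₁ + p₂))) atTop (𝓝 (-B)) := by
  have hApos : 0 < A := hA ▸ rpow_pos_of_pos (by positivity) _
  have hmin : IsMinOn (productRate L₁ L₂ p₁ p₂) (Set.Ioi 0) A :=
    hA ▸ isMinOn_productRate hL₁ hL₂ hp₁ hp₂
  rw [hB]
  exact HasLogWeibullTail.of_product_bounds (F₁ := fun u => (ℙ : Measure Ω).real {ω | Y₁ ω > u})
    (F₂ := fun u => (ℙ : Measure Ω).real {ω | Y₂ ω > u})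
    (P := fun u => (ℙ : Measure Ω).real {ω | Y₁ ω * Y₂ ω > u})
    h₁ h₂ hL₁ hL₂ hp₁ hp₂ hApos hmin (fun _ => measureReal_nonneg) (fun _ => measureReal_nonneg)
    (fun _ _ hx hy => hindep.measureReal_lt_mul_measureReal_lt_le hx hy)
    (fun _ hu _ _ _ hxy => hindep.measureReal_lt_mul_le_sum hY₁pos hu hxy)

theorem logWeibullian_product
    {Ω : Type*} [MeasureSpace Ω] [IsProbabilityMeasure (ℙ : Measure Ω)]
    (Y₁ Y₂ : Ω → ℝ) (hY₁ : Measurable Y₁) (hY₂ : Measurable Y₂)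
    (hindep : IndepFun Y₁ Y₂)
    (hY₁pos : ∀ᵐ ω ∂ℙ, 0 < Y₁ ω) (hY₂pos : ∀ᵐ ω ∂ℙ, 0 < Y₂ ω)
    (L₁ L₂ p₁ p₂ : ℝ) (hL₁ : 0 < L₁) (hL₂ : 0 < L₂) (hp₁ : 0 < p₁) (hp₂ : 0 < p₂)
    (h₁ : Tendsto (fun u => Real.log (ℙ {ω | Y₁ ω > u}).toReal / u ^ p₁) atTop (𝓝 (-L₁)))
    (h₂ : Tendsto (fun u => Real.log (ℙ {ω | Y₂ ω > u}).toReal / u ^ p₂) atTop (𝓝 (-L₂)))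
    (A B : ℝ) (hA : A = ((p₁ * L₁) / (p₂ * L₂)) ^ (1 / (p₁ + p₂)))
    (hB : B = L₁ * A ^ (-p₁) + L₂ * A ^ p₂) :
    Tendsto (fun u => Real.log (ℙ {ω | Y₁ ω * Y₂ ω > u}).toReal /
        u ^ (p₁ * p₂ / (p₁ + p₂))) atTop (𝓝 (-B)) :=
  logWeibullian_product_general Y₁ Y₂ hindep hY₁pos L₁ L₂ p₁ p₂ hL₁ hL₂ hp₁ hp₂ h₁ h₂ A B hA hB
end

section
/- Let Y1, Y2 be independent positive random variables with log-Weibullian tails log P(Y_i > u)/u^{p_i} → -L_i (i = 1, 2). Then liminf_{u→∞} log P(Y1Y2 > u)/u^{p1p2/(p1+p2)} ≥ -(L1 ((p2L2)/(p1L1))^{p1/(p1+p2)} + L2 ((p1L1)/(p2L2))^{p2/(p1+p2)}). -/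
open MeasureTheory ProbabilityTheory Filter Topology Real

/-!
If `t₁ + t₂ = 1` and `c₁ c₂ = 1`, then `Y₁ > c₁ u ^ t₁` and `Y₂ > c₂ u ^ t₂` force `Y₁ Y₂ > u`, so by
independence `log P(Y₁ Y₂ > u)` is at least the sum of the two log-tails, which behave like
`-L_i c_i ^ p_i u ^ (t_i p_i)`. The exponents `t₁ = p₂ / (p₁ + p₂)`, `t₂ = p₁ / (p₁ + p₂)` put both
on the scale `u ^ (p₁ p₂ / (p₁ + p₂))`, and `c₁ = (p₂ L₂ / (p₁ L₁)) ^ (1 / (p₁ + p₂))` minimises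
`L₁ c₁ ^ p₁ + L₂ c₁ ^ (-p₂)`, which yields the constant.
-/

lemma tendsto_comp_const_mul_rpow_div_rpow {f : ℝ → ℝ} {p t c l : ℝ} (ht : 0 < t) (hc : 0 < c)
    (h : Tendsto (fun u => f u / u ^ p) atTop (𝓝 l)) :
    Tendsto (fun u => f (c * u ^ t) / u ^ (t * p)) atTop (𝓝 (l * c ^ p)) := by
  have hcomp := (h.comp ((tendsto_rpow_atTop ht).const_mul_atTop hc)).mul_const (c ^ p)
  refine hcomp.congr' ?_
  filter_upwards [eventually_gt_atTop 0] with u hu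
  have hcp : c ^ p ≠ 0 := (rpow_pos_of_pos hc p).ne'
  simp only [Function.comp_apply]
  rw [mul_rpow hc.le (rpow_nonneg hu.le t), ← rpow_mul hu.le]
  field_simp

/-- Uses the junk value `log 0 = 0`. -/
lemma eventually_ne_zero_of_tendsto_log_div {ι : Type*} {F : Filter ι} {g d : ι → ℝ} {l : ℝ}
    (h : Tendsto (fun u => log (g u) / d u) F (𝓝 l)) (hl : l ≠ 0) : ∀ᶠ u in F, g u ≠ 0 := by
  filter_upwards [h.eventually_ne hl] with u hu hg
  simp [hg] at hu

lemma le_liminf_of_tendsto_of_eventually_le {ι α : Type*} [ConditionallyCompleteLinearOrder α]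
    [TopologicalSpace α] [OrderTopology α] {F : Filter ι} [F.NeBot] {f g : ι → α} {l : α}
    (hg : Tendsto g F (𝓝 l)) (hgf : g ≤ᶠ[F] f) (hf : IsBoundedUnder (· ≤ ·) F f) :
    l ≤ liminf f F :=
  hg.liminf_eq ▸ liminf_le_liminf hgf hg.isBoundedUnder_ge hf.isCoboundedUnder_ge

section Tails

variable {Ω : Type*} {m : MeasurableSpace Ω} {μ : Measure Ω} {X Y : Ω → ℝ}

lemma ProbabilityTheory.IndepFun.measure_gt_mul_measure_gt_le (h : IndepFun X Y μ) {a b : ℝ} (ha : 0 ≤ a)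
    (hb : 0 ≤ b) : μ {ω | X ω > a} * μ {ω | Y ω > b} ≤ μ {ω | X ω * Y ω > a * b} := by
  have hprod := h.measure_inter_preimage_eq_mul _ _ (measurableSet_Ioi (a := a))
    (measurableSet_Ioi (a := b))
  calc μ {ω | X ω > a} * μ {ω | Y ω > b} = μ ({ω | X ω > a} ∩ {ω | Y ω > b}) := hprod.symm
    _ ≤ μ {ω | X ω * Y ω > a * b} :=
      measure_mono fun ω ⟨hX, hY⟩ => mul_lt_mul'' (a := a) hX hY ha hb

lemma ProbabilityTheory.IndepFun.log_measure_gt_add_le [IsFiniteMeasure μ] (h : IndepFun X Y μ) {a b : ℝ}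
    (ha : 0 ≤ a) (hb : 0 ≤ b) (hXa : 0 < (μ {ω | X ω > a}).toReal)
    (hYb : 0 < (μ {ω | Y ω > b}).toReal) :
    log (μ {ω | X ω > a}).toReal + log (μ {ω | Y ω > b}).toReal ≤
      log (μ {ω | X ω * Y ω > a * b}).toReal := by
  rw [← log_mul hXa.ne' hYb.ne', ← ENNReal.toReal_mul]
  exact log_le_log (by rw [ENNReal.toReal_mul]; positivity)
    (ENNReal.toReal_mono (measure_ne_top _ _) (h.measure_gt_mul_measure_gt_le ha hb))

lemma log_measure_toReal_nonpos [IsProbabilityMeasure μ] (s : Set Ω) :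
    log (μ s).toReal ≤ 0 :=
  log_nonpos ENNReal.toReal_nonneg (ENNReal.toReal_le_of_le_ofReal zero_le_one
    (by simpa using prob_le_one))

end Tails

theorem le_liminf_log_measure_mul_gt {Ω : Type*} {m : MeasurableSpace Ω} {μ : Measure Ω}
    [IsProbabilityMeasure μ] {Y₁ Y₂ : Ω → ℝ} (hindep : IndepFun Y₁ Y₂ μ) {L₁ L₂ p₁ p₂ : ℝ}
    (hL₁ : L₁ ≠ 0) (hL₂ : L₂ ≠ 0) (hp₁ : 0 < p₁) (hp₂ : 0 < p₂)
    (h₁ : Tendsto (fun u => log (μ {ω | Y₁ ω > u}).toReal / u ^ p₁) atTop (𝓝 (-L₁)))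
    (h₂ : Tendsto (fun u => log (μ {ω | Y₂ ω > u}).toReal / u ^ p₂) atTop (𝓝 (-L₂)))
    {c₁ c₂ : ℝ} (hc₁ : 0 < c₁) (hc₂ : 0 < c₂) (hc : c₁ * c₂ = 1) :
    -(L₁ * c₁ ^ p₁ + L₂ * c₂ ^ p₂) ≤
      liminf (fun u => log (μ {ω | Y₁ ω * Y₂ ω > u}).toReal / u ^ (p₁ * p₂ / (p₁ + p₂))) atTop := by
  have hs : p₁ + p₂ ≠ 0 := by positivity
  set r := p₁ * p₂ / (p₁ + p₂)
  set t₁ := p₂ / (p₁ + p₂)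
  set t₂ := p₁ / (p₁ + p₂)
  have ht₁ : 0 < t₁ := by positivity
  have ht₂ : 0 < t₂ := by positivity
  have H₁ := tendsto_comp_const_mul_rpow_div_rpow ht₁ hc₁ h₁
  have H₂ := tendsto_comp_const_mul_rpow_div_rpow ht₂ hc₂ h₂
  rw [show t₁ * p₁ = r by ring] at H₁
  rw [show t₂ * p₂ = r by ring] at H₂
  have tail_pos {Y : Ω → ℝ} {L p : ℝ} (hL : L ≠ 0)
      (h : Tendsto (fun u => log (μ {ω | Y ω > u}).toReal / u ^ p) atTop (𝓝 (-L))) :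
      ∀ᶠ u in atTop, 0 < (μ {ω | Y ω > u}).toReal :=
    (eventually_ne_zero_of_tendsto_log_div h (neg_ne_zero.2 hL)).mono fun _ hu =>
      ENNReal.toReal_nonneg.lt_of_ne' hu
  have hthreshold {c t : ℝ} (hc : 0 < c) (ht : 0 < t) :
      Tendsto (fun u : ℝ => c * u ^ t) atTop atTop :=
    (tendsto_rpow_atTop ht).const_mul_atTop hc
  rw [neg_add, ← neg_mul, ← neg_mul]
  refine le_liminf_of_tendsto_of_eventually_le (H₁.add H₂) ?_ ?_
  · filter_upwards [(hthreshold hc₁ ht₁).eventually (tail_pos hL₁ h₁),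
      (hthreshold hc₂ ht₂).eventually (tail_pos hL₂ h₂), eventually_gt_atTop 0]
      with u hu₁ hu₂ hu
    have hsplit : (c₁ * u ^ t₁) * (c₂ * u ^ t₂) = u := by
      rw [mul_mul_mul_comm, hc, one_mul, ← rpow_add hu, ← add_div, add_comm p₂, div_self hs,
        rpow_one]
    have hlog := hindep.log_measure_gt_add_le (by positivity) (by positivity) hu₁ hu₂
    rw [hsplit] at hlog
    rw [← add_div]
    gcongr
  · refine ⟨0, eventually_map.2 ?_⟩
    filter_upwards [eventually_ge_atTop 0] with u hu
    exact div_nonpos_of_nonpos_of_nonneg (log_measure_toReal_nonpos _) (by positivity)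

theorem logWeibullian_product_liminf_lower_bound_general
    {Ω : Type*} [MeasureSpace Ω] [IsProbabilityMeasure (ℙ : Measure Ω)]
    (Y₁ Y₂ : Ω → ℝ)
    (hindep : IndepFun Y₁ Y₂)
    (L₁ L₂ p₁ p₂ : ℝ) (hL₁ : 0 < L₁) (hL₂ : 0 < L₂) (hp₁ : 0 < p₁) (hp₂ : 0 < p₂)
    (h₁ : Tendsto (fun u => Real.log (ℙ {ω | Y₁ ω > u}).toReal / u ^ p₁) atTop (𝓝 (-L₁)))
    (h₂ : Tendsto (fun u => Real.log (ℙ {ω | Y₂ ω > u}).toReal / u ^ p₂) atTop (𝓝 (-L₂))) :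
    -(L₁ * ((p₂ * L₂) / (p₁ * L₁)) ^ (p₁ / (p₁ + p₂)) +
        L₂ * ((p₁ * L₁) / (p₂ * L₂)) ^ (p₂ / (p₁ + p₂))) ≤
      Filter.liminf (fun u => Real.log (ℙ {ω | Y₁ ω * Y₂ ω > u}).toReal /
        u ^ (p₁ * p₂ / (p₁ + p₂))) atTop := by
  set x := (p₂ * L₂) / (p₁ * L₁)
  have hx : 0 < x := by positivity
  set c := x ^ (p₁ + p₂)⁻¹
  have hc : 0 < c := rpow_pos_of_pos hx _
  have hc_pow (p : ℝ) : c ^ p = x ^ (p / (p₁ + p₂)) := by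
    rw [← rpow_mul hx.le, inv_mul_eq_div]
  have hxinv : (p₁ * L₁) / (p₂ * L₂) = x⁻¹ := (inv_div _ _).symm
  rw [hxinv, inv_rpow hx.le, ← hc_pow, ← hc_pow, ← inv_rpow hc.le]
  exact le_liminf_log_measure_mul_gt hindep hL₁.ne' hL₂.ne' hp₁ hp₂ h₁ h₂ hc (inv_pos.2 hc)
    (mul_inv_cancel₀ hc.ne')

theorem logWeibullian_product_liminf_lower_bound
    {Ω : Type*} [MeasureSpace Ω] [IsProbabilityMeasure (ℙ : Measure Ω)]
    (Y₁ Y₂ : Ω → ℝ) (hY₁ : Measurable Y₁) (hY₂ : Measurable Y₂)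
    (hindep : IndepFun Y₁ Y₂)
    (hY₁pos : ∀ᵐ ω ∂ℙ, 0 < Y₁ ω) (hY₂pos : ∀ᵐ ω ∂ℙ, 0 < Y₂ ω)
    (L₁ L₂ p₁ p₂ : ℝ) (hL₁ : 0 < L₁) (hL₂ : 0 < L₂) (hp₁ : 0 < p₁) (hp₂ : 0 < p₂)
    (h₁ : Tendsto (fun u => Real.log (ℙ {ω | Y₁ ω > u}).toReal / u ^ p₁) atTop (𝓝 (-L₁)))
    (h₂ : Tendsto (fun u => Real.log (ℙ {ω | Y₂ ω > u}).toReal / u ^ p₂) atTop (𝓝 (-L₂))) :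
    -(L₁ * ((p₂ * L₂) / (p₁ * L₁)) ^ (p₁ / (p₁ + p₂)) +
        L₂ * ((p₁ * L₁) / (p₂ * L₂)) ^ (p₂ / (p₁ + p₂))) ≤
      Filter.liminf (fun u => Real.log (ℙ {ω | Y₁ ω * Y₂ ω > u}).toReal /
        u ^ (p₁ * p₂ / (p₁ + p₂))) atTop :=
  logWeibullian_product_liminf_lower_bound_general Y₁ Y₂ hindep L₁ L₂ p₁ p₂ hL₁ hL₂ hp₁ hp₂ h₁ h₂
end

section
/- Let Y1, Y2, Y1*, Y2* be positive random variables with Y1 independent of Y2 and Y1* independent of Y2*, all with log-Weibullian type tails P(Y_i > u) ∼ g_i(u)exp(-L_i u^{p_i}) (g_i regularly varying, L_i, p_i > 0), and suppose P(Y_i* > u) ∼ P(Y_i > u) for i = 1, 2. Then P(Y1*Y2* > u) ∼ P(Y1Y2 > u) as u → ∞. -/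
/-!
The tail of `Y₁ Y₂` at `u` is `∫ P(Y₂ > u / x) dP_{Y₁}(x)`. Replacing `Y₂` by `Y₂*` changes the
integrand by a factor at most `1 + δ` wherever `u / x ≥ v`, and the remaining range `x > u / v`
costs at most `P(Y₁ > u / v)`. Log-Weibull tails decay rapidly, `P(Y > s) = o(P(Y > s / 2))`,
while `P(Y₁ Y₂ > u) ≥ P(Y₁ > u / 2v) P(Y₂ > 2v)`; so that cost is `o(P(Y₁ Y₂ > u))`.
Swapping one factor at a time gives `P(Y₁* Y₂* > u) ≤ (1 + ε) P(Y₁ Y₂ > u)` eventually, and the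
same argument with the roles exchanged gives the reverse bound.
-/

open MeasureTheory ProbabilityTheory Filter Topology Real

open Set Asymptotics
open scoped ENNReal

theorem RegularlyVarying.eventually_ne_zero {g : ℝ → ℝ} {ρ : ℝ} (hg : RegularlyVarying g ρ) :
    ∀ᶠ u in atTop, g u ≠ 0 := by
  have h := hg 1 one_pos
  simp only [mul_one, one_rpow] at h
  filter_upwards [h.eventually_ne one_ne_zero] with u hu h0
  simp [h0] at hu

theorem RegularlyVarying.isLittleO_mul_exp_half {g : ℝ → ℝ} {ρ L p : ℝ}
    (hg : RegularlyVarying g ρ) (hL : 0 < L) (hp : 0 < p) :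
    (fun s => g s * exp (-(L * s ^ p))) =o[atTop]
      fun s => g (s / 2) * exp (-(L * (s / 2) ^ p)) := by
  have hhalf : Tendsto (fun s : ℝ => s / 2) atTop atTop := tendsto_id.atTop_div_const two_pos
  have hg_ratio : Tendsto (fun s => g s / g (s / 2)) atTop (𝓝 ((2 : ℝ) ^ ρ)) := by
    simpa only [Function.comp_def, div_mul_cancel₀ _ (two_ne_zero' ℝ)] using
      (hg 2 two_pos).comp hhalf
  have hexp : Tendsto (fun s : ℝ => exp (-(L * (2 ^ p - 1) * (s / 2) ^ p))) atTop (𝓝 0) := by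
    have h2p : 0 < L * (2 ^ p - 1) := mul_pos hL (by linarith [one_lt_rpow one_lt_two hp])
    exact tendsto_exp_atBot.comp <| tendsto_neg_atTop_atBot.comp <|
      ((tendsto_rpow_atTop hp).comp hhalf).const_mul_atTop h2p
  rw [isLittleO_iff_tendsto' ((hhalf.eventually hg.eventually_ne_zero).mono
    fun s hs h0 => absurd h0 (mul_ne_zero hs (exp_ne_zero _)))]
  refine ((mul_zero ((2 : ℝ) ^ ρ)) ▸ hg_ratio.mul hexp).congr' ?_
  filter_upwards [eventually_gt_atTop 0] with s hs
  have hsplit : s ^ p = 2 ^ p * (s / 2) ^ p := by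
    rw [← mul_rpow zero_le_two (by positivity), mul_div_cancel₀ _ two_ne_zero]
  rw [mul_div_mul_comm, ← exp_sub, hsplit]
  congr 2
  ring

theorem Asymptotics.IsEquivalent.isLittleO_comp {α β : Type*} [NormedAddCommGroup β]
    {l : Filter α} {f g : α → β} {φ : α → α} (hfg : f ~[l] g) (hφ : Tendsto φ l l)
    (hg : g =o[l] (g ∘ φ)) : f =o[l] (f ∘ φ) :=
  hfg.isBigO.trans_isLittleO (hg.trans_isBigO (hfg.symm.comp_tendsto hφ).isBigO)

theorem Asymptotics.IsEquivalent.eventually_le_one_add_mul {α : Type*} {l : Filter α}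
    {f g : α → ℝ} (hfg : f ~[l] g) (hg : 0 ≤ g) {δ : ℝ} (hδ : 0 < δ) :
    ∀ᶠ x in l, f x ≤ (1 + δ) * g x := by
  filter_upwards [hfg.isLittleO.def hδ] with x hx
  rw [Real.norm_of_nonneg (hg x), Pi.sub_apply, Real.norm_eq_abs] at hx
  linarith [le_abs_self (f x - g x)]

theorem measure_Ioi_pos_of_tendsto_div_one {μ : Measure ℝ} {G : ℝ → ℝ}
    (h : Tendsto (fun u => μ.real (Ioi u) / G u) atTop (𝓝 1)) (t : ℝ) : 0 < μ (Ioi t) := by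
  obtain ⟨u, hu, htu⟩ := ((h.eventually_ne one_ne_zero).and (eventually_ge_atTop t)).exists
  have hμu : μ (Ioi u) ≠ 0 := fun h0 => by simp [measureReal_def, h0] at hu
  exact (pos_iff_ne_zero.2 hμu).trans_le (measure_mono (Ioi_subset_Ioi htu))

theorem tendsto_div_one_of_forall_eventually_le {α : Type*} {l : Filter α} {f g : α → ℝ}
    (hg : ∀ᶠ x in l, 0 < g x) (hfg : ∀ ε > 0, ∀ᶠ x in l, f x ≤ (1 + ε) * g x)
    (hgf : ∀ ε > 0, ∀ᶠ x in l, g x ≤ (1 + ε) * f x) : Tendsto (f / g) l (𝓝 1) := by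
  refine tendsto_order.2 ⟨fun a ha => ?_, fun b hb => ?_⟩
  · filter_upwards [hg, hgf (1 - a) (by linarith)] with x hgx hx
    rw [Pi.div_apply, lt_div_iff₀ hgx]
    nlinarith [mul_pos (mul_pos (sub_pos.2 ha) (sub_pos.2 ha)) hgx]
  · filter_upwards [hg, hfg ((b - 1) / 2) (by linarith)] with x hgx hx
    rw [Pi.div_apply, div_lt_iff₀ hgx]
    nlinarith

theorem mconv_Ioi_eq_lintegral {μ ν : Measure ℝ} [SFinite ν] (hμ : ∀ᵐ x ∂μ, 0 < x) (u : ℝ) :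
    (μ ∗ₘ ν) (Ioi u) = ∫⁻ x, ν (Ioi (u / x)) ∂μ := by
  rw [Measure.mconv, Measure.map_apply measurable_mul measurableSet_Ioi,
    Measure.prod_apply (measurable_mul measurableSet_Ioi)]
  refine lintegral_congr_ae (hμ.mono fun x hx => congrArg ν ?_)
  ext y
  simp [div_lt_iff₀' hx]

theorem mconv_Ioi_le_mul_add {μ ν ν' : Measure ℝ} [SFinite ν] [IsProbabilityMeasure ν']
    (hμ : ∀ᵐ x ∂μ, 0 < x) {K : ℝ≥0∞} {v : ℝ} (hv : 0 < v)
    (h : ∀ t ≥ v, ν' (Ioi t) ≤ K * ν (Ioi t)) (u : ℝ) :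
    (μ ∗ₘ ν') (Ioi u) ≤ K * (μ ∗ₘ ν) (Ioi u) + μ (Ioi (u / v)) := by
  have hmeas : Measurable fun x : ℝ => ν (Ioi (u / x)) :=
    (Antitone.measurable fun _ _ hst => measure_mono (Ioi_subset_Ioi hst)).comp
      (measurable_const.div measurable_id)
  -- for `x ≤ u / v` the hypothesis applies at `u / x ≥ v`; beyond, bound `ν'` by one
  have hpoint : ∀ᵐ x ∂μ,
      ν' (Ioi (u / x)) ≤ K * ν (Ioi (u / x)) + (Ioi (u / v)).indicator 1 x := by
    filter_upwards [hμ] with x hx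
    rcases le_or_gt x (u / v) with hxv | hxv
    · refine (h _ ?_).trans le_self_add
      rwa [ge_iff_le, le_div_iff₀ hx, mul_comm, ← le_div_iff₀ hv]
    · rw [indicator_of_mem (mem_Ioi.2 hxv), Pi.one_apply]
      exact prob_le_one.trans le_add_self
  calc (μ ∗ₘ ν') (Ioi u)
      ≤ ∫⁻ x, K * ν (Ioi (u / x)) + (Ioi (u / v)).indicator 1 x ∂μ := by
        rw [mconv_Ioi_eq_lintegral hμ]; exact lintegral_mono_ae hpoint
    _ = K * (μ ∗ₘ ν) (Ioi u) + μ (Ioi (u / v)) := by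
        rw [lintegral_add_left (hmeas.const_mul K), lintegral_const_mul K hmeas,
          lintegral_indicator_one measurableSet_Ioi, mconv_Ioi_eq_lintegral hμ]

theorem measureReal_mconv_Ioi_le_mul_add {μ ν ν' : Measure ℝ} [IsFiniteMeasure μ]
    [IsFiniteMeasure ν] [IsProbabilityMeasure ν'] (hμ : ∀ᵐ x ∂μ, 0 < x) {K v : ℝ}
    (hK : 0 ≤ K) (hv : 0 < v) (h : ∀ t ≥ v, ν'.real (Ioi t) ≤ K * ν.real (Ioi t)) (u : ℝ) :
    (μ ∗ₘ ν').real (Ioi u) ≤ K * (μ ∗ₘ ν).real (Ioi u) + μ.real (Ioi (u / v)) := by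
  have h' : ∀ t ≥ v, ν' (Ioi t) ≤ ENNReal.ofReal K * ν (Ioi t) := fun t ht => by
    rw [← ofReal_measureReal, ← ofReal_measureReal, ← ENNReal.ofReal_mul hK]
    exact ENNReal.ofReal_le_ofReal (h t ht)
  have := ENNReal.toReal_mono (by finiteness) (mconv_Ioi_le_mul_add hμ hv h' u)
  rwa [ENNReal.toReal_add (by finiteness) (by finiteness), ENNReal.toReal_mul,
    ENNReal.toReal_ofReal hK] at this

theorem measureReal_Ioi_mul_le_measureReal_mconv_Ioi (μ ν : Measure ℝ) [IsFiniteMeasure μ]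
    [IsFiniteMeasure ν] {a u : ℝ} (ha : 0 < a) (hu : 0 ≤ u) :
    μ.real (Ioi a) * ν.real (Ioi (u / a)) ≤ (μ ∗ₘ ν).real (Ioi u) := by
  rw [← measureReal_prod_prod, Measure.mconv,
    map_measureReal_apply measurable_mul measurableSet_Ioi]
  refine measureReal_mono fun p ⟨(hx : a < p.1), (hy : u / a < p.2)⟩ => ?_
  calc u = a * (u / a) := (mul_div_cancel₀ u ha.ne').symm
    _ < p.1 * p.2 := mul_lt_mul'' hx hy ha.le (div_nonneg hu ha.le)

theorem measureReal_mconv_Ioi_pos {μ ν : Measure ℝ} [IsFiniteMeasure μ] [IsFiniteMeasure ν]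
    (hμ : ∀ t, 0 < μ (Ioi t)) (hν : ∀ t, 0 < ν (Ioi t)) {u : ℝ} (hu : 0 ≤ u) :
    0 < (μ ∗ₘ ν).real (Ioi u) :=
  (mul_pos (ENNReal.toReal_pos (hμ 1).ne' (measure_ne_top _ _))
    (ENNReal.toReal_pos (hν _).ne' (measure_ne_top _ _))).trans_le
      (measureReal_Ioi_mul_le_measureReal_mconv_Ioi μ ν one_pos hu)

theorem isLittleO_measureReal_Ioi_mconv {μ ν : Measure ℝ} [IsFiniteMeasure μ]
    [IsFiniteMeasure ν]
    (hμ : (fun s => μ.real (Ioi s)) =o[atTop] fun s => μ.real (Ioi (s / 2)))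
    (hν : ∀ t, 0 < ν (Ioi t)) {c : ℝ} (hc : 0 < c) :
    (fun u => μ.real (Ioi (u / c))) =o[atTop] fun u => (μ ∗ₘ ν).real (Ioi u) := by
  have hνc : 0 < ν.real (Ioi (2 * c)) := ENNReal.toReal_pos (hν _).ne' (measure_ne_top _ _)
  -- the rectangle `(u / c / 2, ∞) × (2c, ∞)` lies in `{x * y > u}`
  have hrect : (fun u => μ.real (Ioi (u / c / 2))) =O[atTop]
      fun u => (μ ∗ₘ ν).real (Ioi u) := by
    refine IsBigO.of_bound (ν.real (Ioi (2 * c)))⁻¹ ?_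
    filter_upwards [eventually_gt_atTop 0] with u hu
    have h := measureReal_Ioi_mul_le_measureReal_mconv_Ioi μ ν (a := u / c / 2)
      (by positivity) hu.le
    rw [show u / (u / c / 2) = 2 * c by field_simp] at h
    rw [Real.norm_of_nonneg measureReal_nonneg, Real.norm_of_nonneg measureReal_nonneg,
      inv_mul_eq_div, le_div_iff₀ hνc]
    exact h
  exact (hμ.comp_tendsto (tendsto_id.atTop_div_const hc)).trans_isBigO hrect

theorem eventually_measureReal_mconv_Ioi_le {μ₁ μ₂ ν₁ ν₂ : Measure ℝ} [IsProbabilityMeasure μ₁]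
    [IsProbabilityMeasure μ₂] [IsProbabilityMeasure ν₁] [IsProbabilityMeasure ν₂]
    (hν₁ : ∀ᵐ x ∂ν₁, 0 < x) (hμ₂ : ∀ᵐ x ∂μ₂, 0 < x)
    (h₁ : (fun t => ν₁.real (Ioi t)) ~[atTop] fun t => μ₁.real (Ioi t))
    (h₂ : (fun t => ν₂.real (Ioi t)) ~[atTop] fun t => μ₂.real (Ioi t))
    (hμ₁o : (fun s => μ₁.real (Ioi s)) =o[atTop] fun s => μ₁.real (Ioi (s / 2)))
    (hμ₂o : (fun s => μ₂.real (Ioi s)) =o[atTop] fun s => μ₂.real (Ioi (s / 2)))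
    (hμ₁pos : ∀ t, 0 < μ₁ (Ioi t)) (hμ₂pos : ∀ t, 0 < μ₂ (Ioi t)) {ε : ℝ} (hε : 0 < ε) :
    ∀ᶠ u in atTop, (ν₁ ∗ₘ ν₂).real (Ioi u) ≤ (1 + ε) * (μ₁ ∗ₘ μ₂).real (Ioi u) := by
  -- with `K = 1 + δ`, the bound below is `K ^ 2 + 2 * K * δ ≤ 1 + 7 * δ ≤ 1 + ε`
  set δ := min 1 (ε / 7)
  have hδ : 0 < δ := lt_min one_pos (by positivity)
  have hδ1 : δ ≤ 1 := min_le_left _ _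
  have hδε : δ ≤ ε / 7 := min_le_right _ _
  obtain ⟨w, hw⟩ := eventually_atTop.1 <|
    (h₁.eventually_le_one_add_mul (fun _ => measureReal_nonneg) hδ).and
      (h₂.eventually_le_one_add_mul (fun _ => measureReal_nonneg) hδ)
  set v := max w 1
  have hv : 0 < v := lt_max_of_lt_right one_pos
  have hcmp : ∀ t ≥ v, ν₁.real (Ioi t) ≤ (1 + δ) * μ₁.real (Ioi t) ∧
      ν₂.real (Ioi t) ≤ (1 + δ) * μ₂.real (Ioi t) := fun t ht => hw t (le_of_max_le_left ht)
  have hr₁ := (isLittleO_measureReal_Ioi_mconv hμ₁o hμ₂pos hv).def hδ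
  have hr₂ := (isLittleO_measureReal_Ioi_mconv hμ₂o hμ₁pos hv).def hδ
  rw [Measure.mconv_comm] at hr₂
  filter_upwards [hr₁, hr₂, eventually_ge_atTop (v * v)] with u hu₁ hu₂ huv
  simp only [Real.norm_of_nonneg measureReal_nonneg] at hu₁ hu₂
  have hK : (0 : ℝ) ≤ 1 + δ := by linarith
  have hN := measureReal_mconv_Ioi_le_mul_add (ν := μ₂) hν₁ hK hv (fun t ht => (hcmp t ht).2) u
  have hM := measureReal_mconv_Ioi_le_mul_add (ν := μ₁) hμ₂ hK hv (fun t ht => (hcmp t ht).1) u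
  rw [Measure.mconv_comm, Measure.mconv_comm μ₂] at hM
  have hν₁u := (hcmp (u / v) ((le_div_iff₀ hv).2 huv)).1
  have hA : 0 ≤ (μ₁ ∗ₘ μ₂).real (Ioi u) := measureReal_nonneg
  nlinarith [mul_le_mul_of_nonneg_left hM hK, mul_le_mul_of_nonneg_left hu₁ hK,
    mul_le_mul_of_nonneg_left hu₂ hK, mul_le_mul_of_nonneg_right hδ1 (mul_nonneg hδ.le hA),
    mul_le_mul_of_nonneg_right hδε hA]

theorem tendsto_measureReal_mconv_Ioi_div {μ₁ μ₂ ν₁ ν₂ : Measure ℝ} [IsProbabilityMeasure μ₁]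
    [IsProbabilityMeasure μ₂] [IsProbabilityMeasure ν₁] [IsProbabilityMeasure ν₂]
    (hμ₁ : ∀ᵐ x ∂μ₁, 0 < x) (hμ₂ : ∀ᵐ x ∂μ₂, 0 < x)
    (hν₁ : ∀ᵐ x ∂ν₁, 0 < x) (hν₂ : ∀ᵐ x ∂ν₂, 0 < x)
    (h₁ : Tendsto (fun t => ν₁.real (Ioi t) / μ₁.real (Ioi t)) atTop (𝓝 1))
    (h₂ : Tendsto (fun t => ν₂.real (Ioi t) / μ₂.real (Ioi t)) atTop (𝓝 1))
    (hμ₁o : (fun s => μ₁.real (Ioi s)) =o[atTop] fun s => μ₁.real (Ioi (s / 2)))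
    (hμ₂o : (fun s => μ₂.real (Ioi s)) =o[atTop] fun s => μ₂.real (Ioi (s / 2)))
    (hμ₁pos : ∀ t, 0 < μ₁ (Ioi t)) (hμ₂pos : ∀ t, 0 < μ₂ (Ioi t)) :
    Tendsto (fun u => (ν₁ ∗ₘ ν₂).real (Ioi u) / (μ₁ ∗ₘ μ₂).real (Ioi u)) atTop (𝓝 1) := by
  have hhalf : Tendsto (fun s : ℝ => s / 2) atTop atTop := tendsto_id.atTop_div_const two_pos
  have e₁ := isEquivalent_of_tendsto_one h₁
  have e₂ := isEquivalent_of_tendsto_one h₂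
  refine tendsto_div_one_of_forall_eventually_le ((eventually_ge_atTop 0).mono
    fun u hu => measureReal_mconv_Ioi_pos hμ₁pos hμ₂pos hu) (fun ε hε => ?_) (fun ε hε => ?_)
  · exact eventually_measureReal_mconv_Ioi_le hν₁ hμ₂ e₁ e₂ hμ₁o hμ₂o hμ₁pos hμ₂pos hε
  · exact eventually_measureReal_mconv_Ioi_le hμ₁ hν₂ e₁.symm e₂.symm
      (e₁.isLittleO_comp hhalf hμ₁o) (e₂.isLittleO_comp hhalf hμ₂o)
      (measure_Ioi_pos_of_tendsto_div_one h₁) (measure_Ioi_pos_of_tendsto_div_one h₂) hε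

theorem product_tail_equivalence_stability_general
    {Ω : Type*} [MeasureSpace Ω] [IsProbabilityMeasure (ℙ : Measure Ω)]
    (Y₁ Y₂ Y₁s Y₂s : Ω → ℝ)
    (hY₁ : Measurable Y₁) (hY₂ : Measurable Y₂)
    (hY₁s : Measurable Y₁s) (hY₂s : Measurable Y₂s)
    (hindep : IndepFun Y₁ Y₂) (hindeps : IndepFun Y₁s Y₂s)
    (hY₁pos : ∀ᵐ ω ∂ℙ, 0 < Y₁ ω) (hY₂pos : ∀ᵐ ω ∂ℙ, 0 < Y₂ ω)
    (hY₁spos : ∀ᵐ ω ∂ℙ, 0 < Y₁s ω) (hY₂spos : ∀ᵐ ω ∂ℙ, 0 < Y₂s ω)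
    (L₁ L₂ p₁ p₂ : ℝ) (hL₁ : 0 < L₁) (hL₂ : 0 < L₂) (hp₁ : 0 < p₁) (hp₂ : 0 < p₂)
    (g₁ g₂ : ℝ → ℝ)
    (ρ₁ ρ₂ : ℝ) (hg₁ : RegularlyVarying g₁ ρ₁) (hg₂ : RegularlyVarying g₂ ρ₂)
    (h₁ : Tendsto (fun u => (ℙ {ω | Y₁ ω > u}).toReal /
        (g₁ u * Real.exp (-(L₁ * u ^ p₁)))) atTop (𝓝 1))
    (h₂ : Tendsto (fun u => (ℙ {ω | Y₂ ω > u}).toReal /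
        (g₂ u * Real.exp (-(L₂ * u ^ p₂)))) atTop (𝓝 1))
    (heq₁ : Tendsto (fun u => (ℙ {ω | Y₁s ω > u}).toReal /
        (ℙ {ω | Y₁ ω > u}).toReal) atTop (𝓝 1))
    (heq₂ : Tendsto (fun u => (ℙ {ω | Y₂s ω > u}).toReal /
        (ℙ {ω | Y₂ ω > u}).toReal) atTop (𝓝 1)) :
    Tendsto (fun u => (ℙ {ω | Y₁s ω * Y₂s ω > u}).toReal /
        (ℙ {ω | Y₁ ω * Y₂ ω > u}).toReal) atTop (𝓝 1) := by
  have tail : ∀ {Y : Ω → ℝ}, Measurable Y → ∀ u,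
      (ℙ {ω | Y ω > u}).toReal = (Measure.map Y ℙ).real (Ioi u) :=
    fun hY u => (map_measureReal_apply hY measurableSet_Ioi).symm
  have tail_mul : ∀ {Y Z : Ω → ℝ}, Measurable Y → Measurable Z → IndepFun Y Z → ∀ u,
      (ℙ {ω | Y ω * Z ω > u}).toReal = (Measure.map Y ℙ ∗ₘ Measure.map Z ℙ).real (Ioi u) :=
    fun hY hZ hYZ u => by rw [← hYZ.map_mul_eq_map_mconv_map hY hZ]; exact tail (hY.mul hZ) u
  have pos : ∀ {Y : Ω → ℝ}, Measurable Y → (∀ᵐ ω ∂ℙ, 0 < Y ω) →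
      ∀ᵐ x ∂(Measure.map Y ℙ), 0 < x :=
    fun hY h => (ae_map_iff hY.aemeasurable measurableSet_Ioi).2 h
  have := Measure.isProbabilityMeasure_map (μ := ℙ) hY₁.aemeasurable
  have := Measure.isProbabilityMeasure_map (μ := ℙ) hY₂.aemeasurable
  have := Measure.isProbabilityMeasure_map (μ := ℙ) hY₁s.aemeasurable
  have := Measure.isProbabilityMeasure_map (μ := ℙ) hY₂s.aemeasurable
  simp only [tail hY₁, tail hY₂, tail hY₁s, tail hY₂s] at h₁ h₂ heq₁ heq₂
  simp only [tail_mul hY₁ hY₂ hindep, tail_mul hY₁s hY₂s hindeps]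
  have hhalf : Tendsto (fun s : ℝ => s / 2) atTop atTop := tendsto_id.atTop_div_const two_pos
  exact tendsto_measureReal_mconv_Ioi_div (pos hY₁ hY₁pos) (pos hY₂ hY₂pos)
    (pos hY₁s hY₁spos) (pos hY₂s hY₂spos) heq₁ heq₂
    ((isEquivalent_of_tendsto_one h₁).isLittleO_comp hhalf (hg₁.isLittleO_mul_exp_half hL₁ hp₁))
    ((isEquivalent_of_tendsto_one h₂).isLittleO_comp hhalf (hg₂.isLittleO_mul_exp_half hL₂ hp₂))
    (measure_Ioi_pos_of_tendsto_div_one h₁) (measure_Ioi_pos_of_tendsto_div_one h₂)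

theorem product_tail_equivalence_stability
    {Ω : Type*} [MeasureSpace Ω] [IsProbabilityMeasure (ℙ : Measure Ω)]
    (Y₁ Y₂ Y₁s Y₂s : Ω → ℝ)
    (hY₁ : Measurable Y₁) (hY₂ : Measurable Y₂)
    (hY₁s : Measurable Y₁s) (hY₂s : Measurable Y₂s)
    (hindep : IndepFun Y₁ Y₂) (hindeps : IndepFun Y₁s Y₂s)
    (hY₁pos : ∀ᵐ ω ∂ℙ, 0 < Y₁ ω) (hY₂pos : ∀ᵐ ω ∂ℙ, 0 < Y₂ ω)
    (hY₁spos : ∀ᵐ ω ∂ℙ, 0 < Y₁s ω) (hY₂spos : ∀ᵐ ω ∂ℙ, 0 < Y₂s ω)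
    (L₁ L₂ p₁ p₂ : ℝ) (hL₁ : 0 < L₁) (hL₂ : 0 < L₂) (hp₁ : 0 < p₁) (hp₂ : 0 < p₂)
    (g₁ g₂ : ℝ → ℝ) (hg₁pos : ∀ u > 0, 0 < g₁ u) (hg₂pos : ∀ u > 0, 0 < g₂ u)
    (ρ₁ ρ₂ : ℝ) (hg₁ : RegularlyVarying g₁ ρ₁) (hg₂ : RegularlyVarying g₂ ρ₂)
    (h₁ : Tendsto (fun u => (ℙ {ω | Y₁ ω > u}).toReal /
        (g₁ u * Real.exp (-(L₁ * u ^ p₁)))) atTop (𝓝 1))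
    (h₂ : Tendsto (fun u => (ℙ {ω | Y₂ ω > u}).toReal /
        (g₂ u * Real.exp (-(L₂ * u ^ p₂)))) atTop (𝓝 1))
    (heq₁ : Tendsto (fun u => (ℙ {ω | Y₁s ω > u}).toReal /
        (ℙ {ω | Y₁ ω > u}).toReal) atTop (𝓝 1))
    (heq₂ : Tendsto (fun u => (ℙ {ω | Y₂s ω > u}).toReal /
        (ℙ {ω | Y₂ ω > u}).toReal) atTop (𝓝 1)) :
    Tendsto (fun u => (ℙ {ω | Y₁s ω * Y₂s ω > u}).toReal /
        (ℙ {ω | Y₁ ω * Y₂ ω > u}).toReal) atTop (𝓝 1) :=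
  product_tail_equivalence_stability_general Y₁ Y₂ Y₁s Y₂s hY₁ hY₂ hY₁s hY₂s hindep hindeps hY₁pos
    hY₂pos hY₁spos hY₂spos L₁ L₂ p₁ p₂ hL₁ hL₂ hp₁ hp₂ g₁ g₂ ρ₁ ρ₂ hg₁ hg₂ h₁ h₂ heq₁ heq₂
end
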